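/- arXiv:1809.02423 — 7 statements merged into one kernel-verified Lean document; each statement's English description precedes it below -/
import Mathlib

section
/- If S is a finite meet-closed subset of a locally finite meet semilattice P such that the set A = {x ∧ y : x, y ∈ S, x ≠ y} is a chain (i.e., S is an A-set), then for every x ∈ S the set of elements of S covered by x in S has at most one element. -/
open scoped Classical

/-- `y` is covered by `x` in the induced order on `T`. -/
def coversIn {α : Type*} [SemilatticeInf α] (T : Set α) (y x : α) : Prop :=
  y ∈ T ∧ x ∈ T ∧ y < x ∧ ∀ z ∈ T, ¬(y < z ∧ z < x)

/-- The set of elements of `S` covered by `x` in `S`. -/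
def CSet {α : Type*} [SemilatticeInf α] (S : Set α) (x : α) : Set α :=
  {y | coversIn S y x}

theorem stmt0 {α : Type*} [SemilatticeInf α] [LocallyFiniteOrder α]
    (S : Finset α) (hmeet : ∀ x ∈ S, ∀ y ∈ S, x ⊓ y ∈ S)
    (hA : IsChain (· ≤ ·) {a : α | ∃ x ∈ S, ∃ y ∈ S, x ≠ y ∧ a = x ⊓ y}) :
    ∀ x ∈ S, (CSet (↑S : Set α) x).Subsingleton := by
  intro x hx y hy z hz
  obtain ⟨hyS, hxS, hyx, hycov⟩ := hy
  obtain ⟨hzS, _, hzx, hzcov⟩ := hz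
  by_contra hne
  have hyA : y ∈ {a : α | ∃ x ∈ S, ∃ y ∈ S, x ≠ y ∧ a = x ⊓ y} :=
    ⟨y, hyS, x, hxS, ne_of_lt hyx, (inf_eq_left.mpr hyx.le).symm⟩
  have hzA : z ∈ {a : α | ∃ x ∈ S, ∃ y ∈ S, x ≠ y ∧ a = x ⊓ y} :=
    ⟨z, hzS, x, hxS, ne_of_lt hzx, (inf_eq_left.mpr hzx.le).symm⟩
  rcases hA hyA hzA hne with h | h
  · exact hycov z hzS ⟨lt_of_le_of_ne h hne, hzx⟩
  · exact hzcov y hyS ⟨lt_of_le_of_ne h (Ne.symm hne), hyx⟩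
end

section
/- Let S be a finite meet-closed set, x ∈ S an element generating a double-chain set in S with disjoint chains A and B covering meetcl(C_S(x)) \ C_S(x). Then there is at most one element z ∈ C_S(x) that covers (in meetcl(C_S(x))) both some element of A and some element of B. -/
open scoped Classical

/-- The meet closure of `T`: all finite meets of elements of `T`. -/
def meetcl {α : Type*} [SemilatticeInf α] (T : Set α) : Set α :=
  {y | ∃ F : Finset α, ∃ h : F.Nonempty, ↑F ⊆ T ∧ y = F.inf' h id}

lemma subset_meetcl' {α : Type*} [SemilatticeInf α] (T : Set α) : T ⊆ meetcl T := by
  intro t ht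
  exact ⟨{t}, ⟨t, Finset.mem_singleton_self t⟩, by simpa using ht, by simp⟩

lemma meetcl_inf' {α : Type*} [SemilatticeInf α] {T : Set α} {y z : α}
    (hy : y ∈ meetcl T) (hz : z ∈ meetcl T) : y ⊓ z ∈ meetcl T := by
  obtain ⟨F, hF, hFT, rfl⟩ := hy
  obtain ⟨G, hG, hGT, rfl⟩ := hz
  refine ⟨F ∪ G, hF.mono Finset.subset_union_left, ?_, ?_⟩
  · intro t ht
    rcases Finset.mem_union.mp (by simpa using ht) with h | h
    · exact hFT h
    · exact hGT h
  · rw [Finset.inf'_union hF hG]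

lemma stmt2_aux {α : Type*} [SemilatticeInf α] {M A B : Set α}
    (hdisj : ∀ a ∈ A, a ∉ B) (hchA : IsChain (· ≤ ·) A)
    {z₁ a₁ b₁ m : α} (hmA : m ∈ A) (ha₁A : a₁ ∈ A) (hb₁B : b₁ ∈ B)
    (hmM : m ∈ M)
    (ha₁ : coversIn M a₁ z₁) (hb₁ : coversIn M b₁ z₁)
    (hmz₁ : m < z₁) (hb₁m : b₁ ≤ m) : False := by
  obtain ⟨ha₁M, _, ha₁z, ha₁cov⟩ := ha₁
  obtain ⟨_, _, hb₁z, hb₁cov⟩ := hb₁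
  have hnam : ¬ a₁ < m := fun h => ha₁cov m hmM ⟨h, hmz₁⟩
  have hma₁ : m ≤ a₁ := by
    rcases eq_or_ne m a₁ with rfl | hne
    · exact le_refl _
    · rcases hchA hmA ha₁A hne with h | h
      · exact h
      · exact absurd (lt_of_le_of_ne h (Ne.symm hne)) hnam
  have hba : b₁ ≤ a₁ := hb₁m.trans hma₁
  have : ¬ b₁ < a₁ := fun h => hb₁cov a₁ ha₁M ⟨h, ha₁z⟩
  have : b₁ = a₁ := hba.lt_or_eq.resolve_left this
  exact hdisj a₁ ha₁A (this ▸ hb₁B)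

theorem stmt2 {α : Type*} [SemilatticeInf α] [LocallyFiniteOrder α]
    (S : Finset α) (hmeet : ∀ x ∈ S, ∀ y ∈ S, x ⊓ y ∈ S)
    (x : α) (hx : x ∈ S)
    (A B : Set α) (hdisj : Disjoint A B)
    (hchA : IsChain (· ≤ ·) A) (hchB : IsChain (· ≤ ·) B)
    (hAB : meetcl (CSet (↑S : Set α) x) \ CSet (↑S : Set α) x = A ∪ B) :
    Set.Subsingleton
      {z ∈ CSet (↑S : Set α) x |
        (∃ a ∈ A, coversIn (meetcl (CSet (↑S : Set α) x)) a z) ∧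
        (∃ b ∈ B, coversIn (meetcl (CSet (↑S : Set α) x)) b z)} := by
  set C : Set α := CSet (↑S : Set α) x with hC
  set M : Set α := meetcl C with hM
  rintro z₁ ⟨hz₁C, ⟨a₁, ha₁A, ha₁⟩, ⟨b₁, hb₁B, hb₁⟩⟩
         z₂ ⟨hz₂C, ⟨a₂, ha₂A, ha₂⟩, ⟨b₂, hb₂B, hb₂⟩⟩
  by_contra hne
  obtain ⟨hz₁S, hxS, hz₁x, hz₁cov⟩ := hz₁C
  obtain ⟨hz₂S, _, hz₂x, hz₂cov⟩ := hz₂C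
  -- z₁ and z₂ are incomparable
  have h12 : ¬ z₁ ≤ z₂ := fun h => hz₁cov z₂ hz₂S ⟨lt_of_le_of_ne h hne, hz₂x⟩
  have h21 : ¬ z₂ ≤ z₁ := fun h => hz₂cov z₁ hz₁S ⟨lt_of_le_of_ne h (Ne.symm hne), hz₁x⟩
  set m := z₁ ⊓ z₂ with hm
  have hmz₁ : m < z₁ := inf_lt_left.mpr h12
  have hmz₂ : m < z₂ := inf_lt_right.mpr h21
  have hz₁M : z₁ ∈ M := subset_meetcl' C ⟨hz₁S, hxS, hz₁x, hz₁cov⟩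
  have hz₂M : z₂ ∈ M := subset_meetcl' C ⟨hz₂S, hxS, hz₂x, hz₂cov⟩
  have hmM : m ∈ M := meetcl_inf' hz₁M hz₂M
  have hmC : m ∉ C := fun hc => hc.2.2.2 z₁ hz₁S ⟨hmz₁, hz₁x⟩
  have hmAB : m ∈ A ∪ B := hAB ▸ (⟨hmM, hmC⟩ : m ∈ M \ C)
  have hdAB : ∀ a ∈ A, a ∉ B := fun a ha => Set.disjoint_left.mp hdisj ha
  have hdBA : ∀ b ∈ B, b ∉ A := fun b hb => Set.disjoint_right.mp hdisj hb
  rcases hmAB with hmA | hmB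
  · rcases hchB.total hb₁B hb₂B with hbb | hbb
    · have hb₁m : b₁ ≤ m := le_inf hb₁.2.2.1.le (hbb.trans hb₂.2.2.1.le)
      exact stmt2_aux hdAB hchA hmA ha₁A hb₁B hmM ha₁ hb₁ hmz₁ hb₁m
    · have hb₂m : b₂ ≤ m := le_inf (hbb.trans hb₁.2.2.1.le) hb₂.2.2.1.le
      exact stmt2_aux hdAB hchA hmA ha₂A hb₂B hmM ha₂ hb₂ hmz₂ hb₂m
  · rcases hchA.total ha₁A ha₂A with haa | haa
    · have ha₁m : a₁ ≤ m := le_inf ha₁.2.2.1.le (haa.trans ha₂.2.2.1.le)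
      exact stmt2_aux hdBA hchB hmB hb₁B ha₁A hmM hb₁ ha₁ hmz₁ ha₁m
    · have ha₂m : a₂ ≤ m := le_inf (haa.trans ha₁.2.2.1.le) ha₂.2.2.1.le
      exact stmt2_aux hdBA hchB hmB hb₂B ha₂A hmM hb₂ ha₂ hmz₂ ha₂m
end

section
/- Let S be a finite meet-closed set and x_i ∈ S an element generating a double-chain set, with meetcl(C_S(x_i)) \ C_S(x_i) = A_i ∪ B_i disjoint chains, and suppose no element of C_S(x_i) attaches to both chains. For x_k in A_i ∪ B_i let η(x_k) be the number of elements of C_S(x_i) attached to x_k, and let x_a, x_b be the top elements of A_i, B_i. Then the Möbius function μ_S(·, x_i) of the poset S satisfies: μ_S(x_i, x_i) = 1; μ_S(x_j, x_i) = −1 for x_j ∈ C_S(x_i); μ_S(x_j, x_i) = η(x_j) − 1 if x_j ∈ {x_a, x_b} is maximal in A_i ∪ B_i; μ_S(x_j, x_i) = η(x_j) + 1 if x_a, x_b are incomparable and x_j = x_a ∧ x_b ∈ A_i ∪ B_i; μ_S(x_j, x_i) = η(x_j) for all other x_j ∈ A_i ∪ B_i; and μ_S(x_j, x_i) = 0 for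 all x_j not equal to x_i and not in meetcl(C_S(x_i)). -/
open scoped Classical

/-!
Write `C` for the coatoms of `x_i` in `S` and `M` for their meet closure. The Möbius recursion
says that `∑_{y ≤ z ≤ x_i} μ(z, x_i) = 0` for `y < x_i`. For `y ∉ M` the elements of `M` above `y`
are exactly those above the meet `w` of the coatoms above `y`. So if `y` is a maximal element of
`S \ M` below `x_i` with `μ(y, x_i) ≠ 0`, the sum over `(y, x_i]` equals the vanishing sum over
`[w, x_i]`, forcing `μ(y, x_i) = 0`.

For `u ∈ A ∪ B` the interval sum then reads `1 - #{c ∈ C | u ≤ c} + ∑_{z ∈ A ∪ B, u ≤ z} μ(z, x_i)`.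
Every coatom above `u` covers exactly one chain element above `u`, so `#{c ∈ C | u ≤ c}` is the
sum of `η` over the chain elements above `u`; and above `u` there is always exactly one more
maximal element of `A ∪ B` than there are meets of incomparable tops. Hence `μ(·, x_i)` and
`η - [maximal in A ∪ B] + [meet of incomparable tops]` have the same sums over all principal upper
sets of `A ∪ B`, and a function on a finite poset is determined by these sums.
-/

open Finset

section UpperSums

variable {β G : Type*} [PartialOrder β] [AddCommGroup G]

theorem Finset.sum_filter_le_and_eq_add (s : Finset β) (p : β → Prop) {y : β} (hy : y ∈ s)
    (hp : p y) (f : β → G) :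
    ∑ z ∈ s with y ≤ z ∧ p z, f z = f y + ∑ z ∈ s with y < z ∧ p z, f z := by
  rw [← sum_insert (by simp)]
  congr 1
  ext z
  simp only [mem_filter, mem_insert, le_iff_eq_or_lt]
  constructor
  · rintro ⟨hz, rfl | hyz, hpz⟩
    exacts [Or.inl rfl, Or.inr ⟨hz, hyz, hpz⟩]
  · rintro (rfl | ⟨hz, hyz, hpz⟩)
    exacts [⟨hy, Or.inl rfl, hp⟩, ⟨hz, Or.inr hyz, hpz⟩]

theorem Finset.sum_filter_le_eq_add (s : Finset β) {y : β} (hy : y ∈ s) (f : β → G) :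
    ∑ z ∈ s with y ≤ z, f z = f y + ∑ z ∈ s with y < z, f z := by
  simpa using s.sum_filter_le_and_eq_add (fun _ => True) hy trivial f

theorem Finset.eq_of_forall_sum_filter_le_eq (T : Finset β) {f g : β → G}
    (h : ∀ u ∈ T, ∑ z ∈ T with u ≤ z, f z = ∑ z ∈ T with u ≤ z, g z) :
    ∀ u ∈ T, f u = g u := by
  by_contra! hbad
  obtain ⟨u₀, hu₀, hne₀⟩ := hbad
  obtain ⟨u, hu, hmax⟩ :=
    (T.filter fun u => f u ≠ g u).exists_maximal ⟨u₀, mem_filter.2 ⟨hu₀, hne₀⟩⟩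
  obtain ⟨huT, hne⟩ := mem_filter.1 hu
  have hstrict : ∑ z ∈ T with u < z, f z = ∑ z ∈ T with u < z, g z := by
    refine sum_congr rfl fun z hz => ?_
    rw [mem_filter] at hz
    by_contra hfz
    exact hz.2.not_ge (hmax (mem_filter.2 ⟨hz.1, hfz⟩) hz.2.le)
  have hu_sum := h u huT
  rw [T.sum_filter_le_eq_add huT, T.sum_filter_le_eq_add huT, hstrict] at hu_sum
  exact hne (add_right_cancel hu_sum)

end UpperSums

section Covers

variable {α : Type*} [SemilatticeInf α] {T : Set α} {x y z : α}

theorem coversIn.eq_of_le (hy : coversIn T y x) (hz : coversIn T z x) (h : y ≤ z) : y = z :=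
  h.eq_or_lt.resolve_right fun hlt => hy.2.2.2 z hz.1 ⟨hlt, hz.2.2.1⟩

theorem IsChain.eq_of_coversIn {A : Set α} (hA : IsChain (· ≤ ·) A) (hyA : y ∈ A) (hzA : z ∈ A)
    (hy : coversIn T y x) (hz : coversIn T z x) : y = z := by
  rcases hA.total hyA hzA with h | h
  exacts [hy.eq_of_le hz h, (hz.eq_of_le hy h).symm]

theorem exists_coversIn_of_lt (hT : T.Finite) (hy : y ∈ T) (hx : x ∈ T) (hyx : y < x) :
    ∃ z, y ≤ z ∧ coversIn T z x := by
  obtain ⟨z, hyz, ⟨hzT, hzx⟩, hmax⟩ :=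
    (hT.subset fun w (hw : w ∈ T ∧ w < x) => hw.1).exists_le_maximal ⟨hy, hyx⟩
  exact ⟨z, hyz, hzT, hx, hzx, fun w hw ⟨hzw, hwx⟩ => hzw.not_ge (hmax ⟨hw, hwx⟩ hzw.le)⟩

end Covers

section MeetClosure

variable {α : Type*} [SemilatticeInf α] {T : Set α} {w y z : α}

theorem subset_meetcl : T ⊆ meetcl T :=
  fun t ht => ⟨{t}, singleton_nonempty t, by simpa using ht, by simp⟩

theorem inf_mem_meetcl (hy : y ∈ meetcl T) (hz : z ∈ meetcl T) : y ⊓ z ∈ meetcl T := by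
  obtain ⟨F, hF, hFT, rfl⟩ := hy
  obtain ⟨G, hG, hGT, rfl⟩ := hz
  refine ⟨F ∪ G, hF.mono subset_union_left, ?_, (inf'_union hF hG id).symm⟩
  rw [coe_union]
  exact Set.union_subset hFT hGT

theorem meetcl_subset {S : Set α} (hS : ∀ a ∈ S, ∀ b ∈ S, a ⊓ b ∈ S) (hT : T ⊆ S) :
    meetcl T ⊆ S := by
  rintro _ ⟨F, hF, hFT, rfl⟩
  exact inf'_mem S hS F hF id fun t ht => hT (hFT ht)

theorem exists_ge_of_mem_meetcl (hy : y ∈ meetcl T) : ∃ t ∈ T, y ≤ t := by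
  obtain ⟨F, ⟨t, ht⟩, hFT, rfl⟩ := hy
  exact ⟨t, hFT ht, inf'_le id ht⟩

theorem le_of_mem_meetcl (hz : z ∈ meetcl T) (h : ∀ t ∈ T, z ≤ t → w ≤ t) : w ≤ z := by
  obtain ⟨F, hF, hFT, rfl⟩ := hz
  exact le_inf' hF id fun t ht => h t (hFT ht) (inf'_le id ht)

/-- The meet of the elements of `T` above `y` is the least element of `meetcl T` above `y`. -/
theorem exists_isLeast_meetcl (hT : T.Finite) (h : ∃ t ∈ T, y ≤ t) :
    ∃ w, IsLeast {z ∈ meetcl T | y ≤ z} w := by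
  obtain ⟨t₀, ht₀, hyt₀⟩ := h
  set F := hT.toFinset.filter (y ≤ ·)
  have hF : F.Nonempty := ⟨t₀, mem_filter.2 ⟨hT.mem_toFinset.2 ht₀, hyt₀⟩⟩
  have hFT : ↑F ⊆ T := fun t ht => hT.mem_toFinset.1 (mem_filter.1 ht).1
  refine ⟨F.inf' hF id, ⟨⟨F, hF, hFT, rfl⟩, le_inf' hF id fun t ht => (mem_filter.1 ht).2⟩, ?_⟩
  rintro z ⟨hz, hyz⟩
  exact le_of_mem_meetcl hz fun t ht hzt =>
    inf'_le id (mem_filter.2 ⟨hT.mem_toFinset.2 ht, hyz.trans hzt⟩)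

end MeetClosure

section Coatoms

variable {α : Type*} [SemilatticeInf α] {S : Finset α} {x y z c : α}

theorem lt_of_mem_meetcl_CSet (hy : y ∈ meetcl (CSet (↑S : Set α) x)) : y < x := by
  obtain ⟨c, hc, hyc⟩ := exists_ge_of_mem_meetcl hy
  exact hyc.trans_lt hc.2.2.1

theorem meetcl_CSet_subset (hS : ∀ a ∈ S, ∀ b ∈ S, a ⊓ b ∈ S) :
    meetcl (CSet (↑S : Set α) x) ⊆ ↑S :=
  meetcl_subset hS fun _ hc => hc.1

theorem eq_of_mem_CSet_of_le (hS : ∀ a ∈ S, ∀ b ∈ S, a ⊓ b ∈ S) (hc : c ∈ CSet (↑S : Set α) x)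
    (hz : z ∈ meetcl (CSet (↑S : Set α) x)) (hcz : c ≤ z) : z = c :=
  (hcz.eq_or_lt.resolve_right fun hlt =>
    hc.2.2.2 z (meetcl_CSet_subset hS hz) ⟨hlt, lt_of_mem_meetcl_CSet hz⟩).symm

theorem exists_isLeast_meetcl_CSet (hx : x ∈ S) (hy : y ∈ S) (hyx : y < x) :
    ∃ w, IsLeast {z ∈ meetcl (CSet (↑S : Set α) x) | y ≤ z} w := by
  obtain ⟨c, hyc, hc⟩ := exists_coversIn_of_lt S.finite_toSet hy hx hyx
  exact exists_isLeast_meetcl (S.finite_toSet.subset fun _ hc => hc.1) ⟨c, hc, hyc⟩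

end Coatoms

section IntervalSums

variable {α : Type*} [PartialOrder α] {S : Finset α} {x y : α}

theorem sum_mobius_eq_zero {mu : α → α → ℤ}
    (hmu : ∀ y ∈ S, ∀ x ∈ S, y < x → mu y x = -∑ z ∈ S with y < z ∧ z ≤ x, mu z x)
    (hy : y ∈ S) (hx : x ∈ S) (hyx : y < x) : ∑ z ∈ S with y ≤ z ∧ z ≤ x, mu z x = 0 := by
  rw [S.sum_filter_le_and_eq_add _ hy hyx.le, hmu y hy x hx hyx, neg_add_cancel]

theorem eq_zero_of_notMem_of_isLeast {M : Set α} {f : α → ℤ} (hMS : M ⊆ ↑S)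
    (hMx : ∀ z ∈ M, z < x) (hleast : ∀ y ∈ S, y < x → ∃ w, IsLeast {z ∈ M | y ≤ z} w)
    (hsum : ∀ y ∈ S, y < x → ∑ z ∈ S with y ≤ z ∧ z ≤ x, f z = 0)
    (hy : y ∈ S) (hyx : y < x) (hyM : y ∉ M) : f y = 0 := by
  by_contra hfy
  obtain ⟨b, -, hb, hmax⟩ := (S.filter fun y => y < x ∧ y ∉ M ∧ f y ≠ 0).exists_le_maximal
    (mem_filter.2 ⟨hy, hyx, hyM, hfy⟩)
  obtain ⟨hbS, hbx, hbM, hfb⟩ := mem_filter.1 hb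
  obtain ⟨w, ⟨hwM, hbw⟩, hwleast⟩ := hleast b hbS hbx
  have hbw : b < w := hbw.lt_of_ne fun h => hbM (h ▸ hwM)
  have hwx := hMx w hwM
  have hshift : ∑ z ∈ S with b < z ∧ z ≤ x, f z = ∑ z ∈ S with w ≤ z ∧ z ≤ x, f z := by
    refine (sum_subset (fun z hz => ?_) fun z hz hzw => ?_).symm
    · obtain ⟨hz, hwz, hzx⟩ := mem_filter.1 hz
      exact mem_filter.2 ⟨hz, hbw.trans_le hwz, hzx⟩
    · obtain ⟨hz, hbz, hzx⟩ := mem_filter.1 hz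
      have hwz : ¬w ≤ z := fun hwz => hzw (mem_filter.2 ⟨hz, hwz, hzx⟩)
      have hzM : z ∉ M := fun hzM => hwz (hwleast ⟨hzM, hbz.le⟩)
      have hzx : z < x := hzx.lt_of_ne fun h => hwz (h ▸ hwx.le)
      by_contra hfz
      exact hbz.not_ge (hmax (mem_filter.2 ⟨hz, hzx, hzM, hfz⟩) hbz.le)
  have hb_sum := hsum b hbS hbx
  rw [S.sum_filter_le_and_eq_add _ hbS hbx.le, hshift, hsum w (hMS hwM) hwx, add_zero] at hb_sum
  exact hfb hb_sum

theorem sum_filter_le_eq_add_add {C D : Set α} [DecidablePred (· ∈ C)] [DecidablePred (· ∈ D)]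
    {f : α → ℤ} (hx : x ∈ S) (hyx : y < x)
    (hCx : ∀ z ∈ C, z < x) (hDx : ∀ z ∈ D, z < x) (hCD : Disjoint C D)
    (hf : ∀ z ∈ S, z ≠ x → z ∉ C → z ∉ D → f z = 0) :
    ∑ z ∈ S with y ≤ z ∧ z ≤ x, f z =
      f x + ∑ z ∈ S with z ∈ C ∧ y ≤ z, f z + ∑ z ∈ S with z ∈ D ∧ y ≤ z, f z := by
  have hdisj : Disjoint (S.filter fun z => z ∈ C ∧ y ≤ z) (S.filter fun z => z ∈ D ∧ y ≤ z) :=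
    disjoint_filter.2 fun z _ hzC hzD => hCD.ne_of_mem hzC.1 hzD.1 rfl
  have hxCD : x ∉ (S.filter fun z => z ∈ C ∧ y ≤ z) ∪ (S.filter fun z => z ∈ D ∧ y ≤ z) := by
    simp only [mem_union, mem_filter, not_or]
    exact ⟨fun h => (hCx x h.2.1).false, fun h => (hDx x h.2.1).false⟩
  rw [add_assoc, ← sum_union hdisj, ← sum_insert hxCD]
  refine (sum_subset (fun z hz => ?_) fun z hz hz' => ?_).symm
  · simp only [mem_insert, mem_union, mem_filter] at hz ⊢
    rcases hz with rfl | ⟨hz, hzC, hyz⟩ | ⟨hz, hzD, hyz⟩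
    exacts [⟨hx, hyx.le, le_rfl⟩, ⟨hz, hyz, (hCx z hzC).le⟩, ⟨hz, hyz, (hDx z hzD).le⟩]
  · simp only [mem_insert, mem_union, mem_filter, not_or, not_and] at hz hz'
    exact hf z hz.1 hz'.1 (fun h => hz'.2.1 hz.1 h hz.2.1) fun h => hz'.2.2 hz.1 h hz.2.1

end IntervalSums

section TwoChains

variable {α : Type*} [SemilatticeInf α] {A B : Set α} {xa xb u z : α}

-- On `A ∪ B`, `μ(u, x_i) = η(u) - maxIndicator (A ∪ B) u + meetIndicator xa xb u` packs the four
-- cases of the theorem into one formula.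
noncomputable def maxIndicator (T : Set α) (z : α) : ℤ := if ∀ y ∈ T, ¬z < y then 1 else 0

noncomputable def meetIndicator (xa xb z : α) : ℤ :=
  if ¬(xa ≤ xb ∨ xb ≤ xa) ∧ z = xa ⊓ xb then 1 else 0

theorem meetIndicator_eq_zero_of_eq_or_eq (hz : z = xa ∨ z = xb) : meetIndicator xa xb z = 0 := by
  refine if_neg fun ⟨hc, hm⟩ => hc ?_
  rcases hz with rfl | rfl
  exacts [Or.inl (inf_eq_left.1 hm.symm), Or.inr (inf_eq_right.1 hm.symm)]

theorem isGreatest_of_not_comparable (hxa : A.Nonempty → xa ∈ A ∧ ∀ a ∈ A, a ≤ xa)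
    (hxb : B.Nonempty → xb ∈ B ∧ ∀ b ∈ B, b ≤ xb) (hab : (A = ∅ ∨ B = ∅) → xa = xb)
    (hc : ¬(xa ≤ xb ∨ xb ≤ xa)) : IsGreatest A xa ∧ IsGreatest B xb := by
  have hA : A.Nonempty := Set.nonempty_iff_ne_empty.2 fun h => hc (Or.inl (hab (Or.inl h)).le)
  have hB : B.Nonempty := Set.nonempty_iff_ne_empty.2 fun h => hc (Or.inl (hab (Or.inr h)).le)
  exact ⟨hxa hA, hxb hB⟩

theorem exists_isGreatest_union_of_comparable (hxa : A.Nonempty → xa ∈ A ∧ ∀ a ∈ A, a ≤ xa)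
    (hxb : B.Nonempty → xb ∈ B ∧ ∀ b ∈ B, b ≤ xb) (hab : (A = ∅ ∨ B = ∅) → xa = xb)
    (hc : xa ≤ xb ∨ xb ≤ xa) (hu : u ∈ A ∪ B) : ∃ t, IsGreatest (A ∪ B) t := by
  wlog h : xa ≤ xb generalizing A B xa xb
  · rw [Set.union_comm] at hu ⊢
    exact this hxb hxa (fun h' => (hab h'.symm).symm) hc.symm hu (hc.resolve_left h)
  refine ⟨xb, ?_, ?_⟩
  · rcases B.eq_empty_or_nonempty with hB | hB
    · have hA : A.Nonempty := by simpa [hB] using Set.nonempty_of_mem hu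
      exact Or.inl (hab (Or.inr hB) ▸ (hxa hA).1)
    · exact Or.inr (hxb hB).1
  · rintro z (hz | hz)
    exacts [((hxa ⟨z, hz⟩).2 z hz).trans h, (hxb ⟨z, hz⟩).2 z hz]

theorem forall_not_lt_iff_of_not_comparable (hA : IsGreatest A xa) (hB : IsGreatest B xb)
    (hc : ¬(xa ≤ xb ∨ xb ≤ xa)) (hz : z ∈ A ∪ B) : (∀ y ∈ A ∪ B, ¬z < y) ↔ z = xa ∨ z = xb := by
  constructor
  · intro h
    rcases hz with hz | hz
    exacts [Or.inl ((hA.2 hz).eq_of_not_lt (h xa (Or.inl hA.1))),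
      Or.inr ((hB.2 hz).eq_of_not_lt (h xb (Or.inr hB.1)))]
  · rintro (rfl | rfl) y (hy | hy) hlt
    exacts [(hA.2 hy).not_gt hlt, hc (Or.inl (hlt.le.trans (hB.2 hy))),
      hc (Or.inr (hlt.le.trans (hA.2 hy))), (hB.2 hy).not_gt hlt]

theorem sum_maxIndicator_sub_meetIndicator (S : Finset α) (hABS : A ∪ B ⊆ ↑S)
    (hxa : A.Nonempty → xa ∈ A ∧ ∀ a ∈ A, a ≤ xa) (hxb : B.Nonempty → xb ∈ B ∧ ∀ b ∈ B, b ≤ xb)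
    (hab : (A = ∅ ∨ B = ∅) → xa = xb) (hinf : ¬(xa ≤ xb ∨ xb ≤ xa) → xa ⊓ xb ∈ A ∪ B)
    (hu : u ∈ A ∪ B) :
    ∑ z ∈ S with z ∈ A ∪ B ∧ u ≤ z, (maxIndicator (A ∪ B) z - meetIndicator xa xb z) = 1 := by
  have hmem : ∀ t ∈ A ∪ B, t ∈ S.filter (fun z => z ∈ A ∪ B ∧ u ≤ z) ↔ u ≤ t :=
    fun t ht => by rw [mem_filter]; exact ⟨fun h => h.2.2, fun h => ⟨hABS ht, ht, h⟩⟩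
  by_cases hc : xa ≤ xb ∨ xb ≤ xa
  · obtain ⟨t, ht, htop⟩ := exists_isGreatest_union_of_comparable hxa hxb hab hc hu
    have hterm : ∀ z ∈ S.filter (fun z => z ∈ A ∪ B ∧ u ≤ z),
        maxIndicator (A ∪ B) z - meetIndicator xa xb z = if z = t then 1 else 0 := by
      intro z hz
      have hmax : (∀ y ∈ A ∪ B, ¬z < y) ↔ z = t :=
        ⟨fun h => (htop (mem_filter.1 hz).2.1).eq_of_not_lt (h t ht),
          by rintro rfl y hy; exact (htop hy).not_gt⟩
      simp only [maxIndicator, meetIndicator, hmax, hc, not_true, false_and, if_false, sub_zero]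
    rw [sum_congr rfl hterm, sum_ite_eq', if_pos ((hmem t ht).2 (htop hu))]
  · obtain ⟨hA, hB⟩ := isGreatest_of_not_comparable hxa hxb hab hc
    have hne : xa ≠ xb := fun h => hc (Or.inl h.le)
    have hterm : ∀ z ∈ S.filter (fun z => z ∈ A ∪ B ∧ u ≤ z),
        maxIndicator (A ∪ B) z - meetIndicator xa xb z =
          (if z = xa then 1 else 0) + (if z = xb then 1 else 0) - if z = xa ⊓ xb then 1 else 0 := by
      intro z hz
      simp only [maxIndicator, meetIndicator,
        forall_not_lt_iff_of_not_comparable hA hB hc (mem_filter.1 hz).2.1, hc, not_false_eq_true,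
        true_and]
      split_ifs <;> simp_all
    rw [sum_congr rfl hterm, sum_sub_distrib, sum_add_distrib, sum_ite_eq', sum_ite_eq',
      sum_ite_eq']
    simp only [hmem xa (Or.inl hA.1), hmem xb (Or.inr hB.1), hmem _ (hinf hc), le_inf_iff]
    rcases hu with hu | hu
    · simp [hA.2 hu]
    · simp [hB.2 hu]

end TwoChains

theorem Set.ncard_sep_eq_card_filter {α : Type*} {S : Finset α} {T : Set α} (hT : T ⊆ ↑S)
    (p : α → Prop) : {z ∈ T | p z}.ncard = #(S.filter fun z => z ∈ T ∧ p z) := by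
  rw [← Set.ncard_coe_finset]
  congr 1
  ext z
  rw [coe_filter, Set.mem_sep_iff]
  exact ⟨fun h => ⟨hT h.1, h⟩, fun h => h.2⟩

section AttachedCoatoms

variable {α : Type*} [SemilatticeInf α] {S : Finset α} {xi xa xb u : α} {A B : Set α}

theorem eq_of_coversIn_of_mem_union {T : Set α} {c y z : α} (hchA : IsChain (· ≤ ·) A)
    (hchB : IsChain (· ≤ ·) B) (hno : ¬((∃ a ∈ A, coversIn T a c) ∧ ∃ b ∈ B, coversIn T b c))
    (hy : y ∈ A ∪ B) (hz : z ∈ A ∪ B) (hyc : coversIn T y c) (hzc : coversIn T z c) : y = z := by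
  rcases hy with hy | hy <;> rcases hz with hz | hz
  · exact hchA.eq_of_coversIn hy hz hyc hzc
  · exact (hno ⟨⟨y, hy, hyc⟩, z, hz, hzc⟩).elim
  · exact (hno ⟨⟨z, hz, hzc⟩, y, hy, hyc⟩).elim
  · exact hchB.eq_of_coversIn hy hz hyc hzc

theorem exists_mem_coversIn_of_le (hS : ∀ a ∈ S, ∀ b ∈ S, a ⊓ b ∈ S)
    (hAB : meetcl (CSet (↑S : Set α) xi) \ CSet (↑S : Set α) xi = A ∪ B) {c : α}
    (hu : u ∈ A ∪ B) (hc : c ∈ CSet (↑S : Set α) xi)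
    (huc : u ≤ c) : ∃ z ∈ A ∪ B, u ≤ z ∧ coversIn (meetcl (CSet (↑S : Set α) xi)) z c := by
  rw [← hAB] at hu ⊢
  obtain ⟨z, huz, hz⟩ := exists_coversIn_of_lt (S.finite_toSet.subset (meetcl_CSet_subset hS))
    hu.1 (subset_meetcl hc) (huc.lt_of_ne fun h => hu.2 (h ▸ hc))
  refine ⟨z, ⟨hz.1, fun hzC => hz.2.2.1.ne ?_⟩, huz, hz⟩
  exact (eq_of_mem_CSet_of_le hS hzC (subset_meetcl hc) hz.2.2.1.le).symm

/-- Each coatom above `u` covers exactly one element of `A ∪ B` above `u`. -/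
theorem card_filter_CSet_le_eq_sum (hS : ∀ a ∈ S, ∀ b ∈ S, a ⊓ b ∈ S)
    (hAB : meetcl (CSet (↑S : Set α) xi) \ CSet (↑S : Set α) xi = A ∪ B)
    (hchA : IsChain (· ≤ ·) A) (hchB : IsChain (· ≤ ·) B)
    (hno : ∀ c ∈ CSet (↑S : Set α) xi,
      ¬((∃ a ∈ A, coversIn (meetcl (CSet (↑S : Set α) xi)) a c) ∧
        (∃ b ∈ B, coversIn (meetcl (CSet (↑S : Set α) xi)) b c)))
    (hu : u ∈ A ∪ B) :
    #(S.filter fun c => c ∈ CSet (↑S : Set α) xi ∧ u ≤ c) =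
      ∑ z ∈ S with z ∈ A ∪ B ∧ u ≤ z,
        #(S.filter fun c => c ∈ CSet (↑S : Set α) xi ∧
          coversIn (meetcl (CSet (↑S : Set α) xi)) z c) := by
  have hABS : A ∪ B ⊆ ↑S := hAB ▸ Set.sdiff_subset.trans (meetcl_CSet_subset hS)
  rw [← card_biUnion]
  · congr 1
    ext c
    simp only [mem_biUnion, mem_filter]
    constructor
    · rintro ⟨hcS, hc, huc⟩
      obtain ⟨z, hz, huz, hzc⟩ := exists_mem_coversIn_of_le hS hAB hu hc huc
      exact ⟨z, ⟨hABS hz, hz, huz⟩, hcS, hc, hzc⟩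
    · rintro ⟨z, ⟨-, -, huz⟩, hcS, hc, hzc⟩
      exact ⟨hcS, hc, huz.trans hzc.2.2.1.le⟩
  · intro y hy z hz hyz
    rw [mem_coe, mem_filter] at hy hz
    exact disjoint_filter.2 fun c _ hyc hzc =>
      hyz (eq_of_coversIn_of_mem_union hchA hchB (hno c hyc.1) hy.2.1 hz.2.1 hyc.2 hzc.2)

theorem inf_mem_of_not_comparable (hS : ∀ a ∈ S, ∀ b ∈ S, a ⊓ b ∈ S)
    (hAB : meetcl (CSet (↑S : Set α) xi) \ CSet (↑S : Set α) xi = A ∪ B)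
    (hxa : A.Nonempty → xa ∈ A ∧ ∀ a ∈ A, a ≤ xa)
    (hxb : B.Nonempty → xb ∈ B ∧ ∀ b ∈ B, b ≤ xb) (hab : (A = ∅ ∨ B = ∅) → xa = xb)
    (hc : ¬(xa ≤ xb ∨ xb ≤ xa)) : xa ⊓ xb ∈ A ∪ B := by
  obtain ⟨hA, hB⟩ := isGreatest_of_not_comparable hxa hxb hab hc
  have hM : A ∪ B ⊆ meetcl (CSet (↑S : Set α) xi) := hAB ▸ Set.sdiff_subset
  rw [← hAB]
  refine ⟨inf_mem_meetcl (hM (Or.inl hA.1)) (hM (Or.inr hB.1)), fun hC => hc (Or.inl ?_)⟩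
  exact inf_eq_left.1 (eq_of_mem_CSet_of_le hS hC (hM (Or.inl hA.1)) inf_le_left).symm

end AttachedCoatoms

section Mobius

variable {α : Type*} [SemilatticeInf α] {S : Finset α} {xi xa xb : α} {A B : Set α}

theorem mobius_eq_neg_one_of_mem_CSet {mu : α → α → ℤ} (hmu1 : mu xi xi = 1)
    (hmu2 : ∀ y ∈ S, ∀ x ∈ S, y < x → mu y x = -∑ z ∈ S with y < z ∧ z ≤ x, mu z x) {c : α}
    (hc : c ∈ CSet (↑S : Set α) xi) : mu c xi = -1 := by
  have hfilter : S.filter (fun z => c < z ∧ z ≤ xi) = {xi} := by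
    ext z
    rw [mem_filter, mem_singleton]
    constructor
    · rintro ⟨hz, hcz, hzx⟩
      exact hzx.eq_of_not_lt fun hzx => hc.2.2.2 z hz ⟨hcz, hzx⟩
    · rintro rfl
      exact ⟨hc.2.1, hc.2.2.1, le_rfl⟩
  rw [hmu2 c hc.1 xi hc.2.1 hc.2.2.1, hfilter, sum_singleton, hmu1]

theorem eq_sub_maxIndicator_add_meetIndicator (hS : ∀ a ∈ S, ∀ b ∈ S, a ⊓ b ∈ S)
    (hxi : xi ∈ S) (hAB : meetcl (CSet (↑S : Set α) xi) \ CSet (↑S : Set α) xi = A ∪ B)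
    (hchA : IsChain (· ≤ ·) A) (hchB : IsChain (· ≤ ·) B)
    (hno : ∀ c ∈ CSet (↑S : Set α) xi,
      ¬((∃ a ∈ A, coversIn (meetcl (CSet (↑S : Set α) xi)) a c) ∧
        (∃ b ∈ B, coversIn (meetcl (CSet (↑S : Set α) xi)) b c)))
    (hxa : A.Nonempty → xa ∈ A ∧ ∀ a ∈ A, a ≤ xa) (hxb : B.Nonempty → xb ∈ B ∧ ∀ b ∈ B, b ≤ xb)
    (hab : (A = ∅ ∨ B = ∅) → xa = xb) {f : α → ℤ} (hfxi : f xi = 1)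
    (hsum : ∀ y ∈ S, y < xi → ∑ z ∈ S with y ≤ z ∧ z ≤ xi, f z = 0)
    (hfC : ∀ c ∈ CSet (↑S : Set α) xi, f c = -1)
    (hvanish : ∀ y ∈ S, y ≠ xi → y ∉ meetcl (CSet (↑S : Set α) xi) → f y = 0)
    {u : α} (hu : u ∈ A ∪ B) :
    f u = ({z ∈ CSet (↑S : Set α) xi | coversIn (meetcl (CSet (↑S : Set α) xi)) u z}.ncard : ℤ) -
      maxIndicator (A ∪ B) u + meetIndicator xa xb u := by
  have hABM : A ∪ B ⊆ meetcl (CSet (↑S : Set α) xi) := hAB ▸ Set.sdiff_subset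
  have hABS : A ∪ B ⊆ ↑S := hABM.trans (meetcl_CSet_subset hS)
  have hCAB : Disjoint (CSet (↑S : Set α) xi) (A ∪ B) := hAB ▸ Set.disjoint_sdiff_right
  have key : ∀ v ∈ S.filter (· ∈ A ∪ B),
      f v = #(S.filter fun c => c ∈ CSet (↑S : Set α) xi ∧
        coversIn (meetcl (CSet (↑S : Set α) xi)) v c) -
          (maxIndicator (A ∪ B) v - meetIndicator xa xb v) := by
    refine (S.filter (· ∈ A ∪ B)).eq_of_forall_sum_filter_le_eq fun v hv => ?_
    obtain ⟨hvS, hv⟩ := mem_filter.1 hv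
    have hvx : v < xi := lt_of_mem_meetcl_CSet (hABM hv)
    have h0 := hsum v hvS hvx
    rw [sum_filter_le_eq_add_add hxi hvx (fun c hc => hc.2.2.1)
      (fun z hz => lt_of_mem_meetcl_CSet (hABM hz)) hCAB
      (fun z hz hne hzC hzAB => hvanish z hz hne fun hzM => hzAB (hAB ▸ ⟨hzM, hzC⟩)),
      sum_congr rfl fun c hc => hfC c (mem_filter.1 hc).2.1, sum_const, nsmul_eq_mul, mul_neg_one,
      hfxi, card_filter_CSet_le_eq_sum hS hAB hchA hchB hno hv] at h0
    rw [filter_filter, sum_sub_distrib,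
      sum_maxIndicator_sub_meetIndicator S hABS hxa hxb hab
        (inf_mem_of_not_comparable hS hAB hxa hxb hab) hv]
    push_cast at h0
    linarith
  rw [Set.ncard_sep_eq_card_filter fun _ hc => hc.1, key u (mem_filter.2 ⟨hABS hu, hu⟩)]
  ring

end Mobius

theorem stmt4_general {α : Type*} [SemilatticeInf α]
    (S : Finset α) (hmeet : ∀ x ∈ S, ∀ y ∈ S, x ⊓ y ∈ S)
    (xi : α) (hxi : xi ∈ S)
    (A B : Set α)
    (hchA : IsChain (· ≤ ·) A) (hchB : IsChain (· ≤ ·) B)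
    (hAB : meetcl (CSet (↑S : Set α) xi) \ CSet (↑S : Set α) xi = A ∪ B)
    -- no element of `C_S(x_i)` attaches to both chains
    (hno : ∀ z ∈ CSet (↑S : Set α) xi,
      ¬((∃ a ∈ A, coversIn (meetcl (CSet (↑S : Set α) xi)) a z) ∧
        (∃ b ∈ B, coversIn (meetcl (CSet (↑S : Set α) xi)) b z)))
    -- top elements of the chains (equal if one of the chains is empty)
    (xa xb : α)
    (hxa : A.Nonempty → xa ∈ A ∧ ∀ a ∈ A, a ≤ xa)
    (hxb : B.Nonempty → xb ∈ B ∧ ∀ b ∈ B, b ≤ xb)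
    (hab : (A = ∅ ∨ B = ∅) → xa = xb)
    -- the Möbius function of the poset `S`
    (mu : α → α → ℤ)
    (hmu1 : ∀ a, mu a a = 1)
    (hmu2 : ∀ y ∈ S, ∀ x ∈ S, y < x →
      mu y x = -∑ z ∈ S.filter (fun z => y < z ∧ z ≤ x), mu z x)
    (hmu0 : ∀ y x : α, ¬y ≤ x → mu y x = 0)
    -- the number of elements of `C_S(x_i)` attached to `k`
    (η : α → ℤ)
    (hη : ∀ k, η k =
      ({z ∈ CSet (↑S : Set α) xi |
        coversIn (meetcl (CSet (↑S : Set α) xi)) k z}.ncard : ℤ)) :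
    mu xi xi = 1 ∧
    (∀ xj ∈ CSet (↑S : Set α) xi, mu xj xi = -1) ∧
    (∀ xj, (xj = xa ∨ xj = xb) → xj ∈ A ∪ B → (∀ y ∈ A ∪ B, ¬xj < y) →
      mu xj xi = η xj - 1) ∧
    (∀ xj, (xj = xa ∨ xj = xb) → xj ∈ A ∪ B → (∃ y ∈ A ∪ B, xj < y) →
      mu xj xi = η xj) ∧
    (∀ xj ∈ A ∪ B, (∃ y ∈ A ∪ B, xj < y) → xj ≠ xa ⊓ xb → mu xj xi = η xj) ∧
    (¬(xa ≤ xb ∨ xb ≤ xa) → xa ⊓ xb ∈ A ∪ B →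
      mu (xa ⊓ xb) xi = η (xa ⊓ xb) + 1) ∧
    (∀ xj ∈ S, xj ≠ xi → xj ∉ meetcl (CSet (↑S : Set α) xi) → mu xj xi = 0) := by
  have hsum : ∀ y ∈ S, y < xi → ∑ z ∈ S with y ≤ z ∧ z ≤ xi, mu z xi = 0 :=
    fun _ hy hyx => sum_mobius_eq_zero hmu2 hy hxi hyx
  have hmuC : ∀ c ∈ CSet (↑S : Set α) xi, mu c xi = -1 :=
    fun _ hc => mobius_eq_neg_one_of_mem_CSet (hmu1 xi) hmu2 hc
  have hvanish : ∀ y ∈ S, y ≠ xi → y ∉ meetcl (CSet (↑S : Set α) xi) → mu y xi = 0 := by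
    intro y hy hne hyM
    by_cases hyx : y ≤ xi
    · exact eq_zero_of_notMem_of_isLeast (f := (mu · xi)) (meetcl_CSet_subset hmeet)
        (fun _ => lt_of_mem_meetcl_CSet) (fun _ => exists_isLeast_meetcl_CSet hxi) hsum hy
        (hyx.lt_of_ne hne) hyM
    · exact hmu0 y xi hyx
  have hchain : ∀ u ∈ A ∪ B, mu u xi = η u - maxIndicator (A ∪ B) u + meetIndicator xa xb u :=
    fun u hu => (hη u).symm ▸ eq_sub_maxIndicator_add_meetIndicator (f := (mu · xi)) hmeet hxi
      hAB hchA hchB hno hxa hxb hab (hmu1 xi) hsum hmuC hvanish hu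
  refine ⟨hmu1 xi, hmuC, fun xj hj hjAB hjmax => ?_, fun xj hj hjAB ⟨y, hy, hjy⟩ => ?_,
    fun xj hjAB ⟨y, hy, hjy⟩ hjm => ?_, fun hc hm => ?_, hvanish⟩
  · rw [hchain xj hjAB, maxIndicator, if_pos hjmax, meetIndicator_eq_zero_of_eq_or_eq hj]
    ring
  · rw [hchain xj hjAB, maxIndicator, if_neg fun h => h y hy hjy,
      meetIndicator_eq_zero_of_eq_or_eq hj]
    ring
  · rw [hchain xj hjAB, maxIndicator, if_neg fun h => h y hy hjy, meetIndicator,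
      if_neg fun h => hjm h.2]
    ring
  · obtain ⟨hA, -⟩ := isGreatest_of_not_comparable hxa hxb hab hc
    have hlt : xa ⊓ xb < xa := inf_le_left.lt_of_ne fun h => hc (Or.inl (inf_eq_left.1 h))
    rw [hchain _ hm, maxIndicator, if_neg fun h => h xa (Or.inl hA.1) hlt, meetIndicator,
      if_pos ⟨hc, rfl⟩]
    ring

theorem stmt4 {α : Type*} [SemilatticeInf α] [LocallyFiniteOrder α]
    (S : Finset α) (hmeet : ∀ x ∈ S, ∀ y ∈ S, x ⊓ y ∈ S)
    (xi : α) (hxi : xi ∈ S)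
    (A B : Set α) (hdisj : Disjoint A B)
    (hchA : IsChain (· ≤ ·) A) (hchB : IsChain (· ≤ ·) B)
    (hAB : meetcl (CSet (↑S : Set α) xi) \ CSet (↑S : Set α) xi = A ∪ B)
    -- no element of `C_S(x_i)` attaches to both chains
    (hno : ∀ z ∈ CSet (↑S : Set α) xi,
      ¬((∃ a ∈ A, coversIn (meetcl (CSet (↑S : Set α) xi)) a z) ∧
        (∃ b ∈ B, coversIn (meetcl (CSet (↑S : Set α) xi)) b z)))
    -- top elements of the chains (equal if one of the chains is empty)
    (xa xb : α)
    (hxa : A.Nonempty → xa ∈ A ∧ ∀ a ∈ A, a ≤ xa)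
    (hxb : B.Nonempty → xb ∈ B ∧ ∀ b ∈ B, b ≤ xb)
    (hab : (A = ∅ ∨ B = ∅) → xa = xb)
    -- the Möbius function of the poset `S`
    (mu : α → α → ℤ)
    (hmu1 : ∀ a, mu a a = 1)
    (hmu2 : ∀ y ∈ S, ∀ x ∈ S, y < x →
      mu y x = -∑ z ∈ S.filter (fun z => y < z ∧ z ≤ x), mu z x)
    (hmu0 : ∀ y x : α, ¬y ≤ x → mu y x = 0)
    -- the number of elements of `C_S(x_i)` attached to `k`
    (η : α → ℤ)
    (hη : ∀ k, η k =
      ({z ∈ CSet (↑S : Set α) xi |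
        coversIn (meetcl (CSet (↑S : Set α) xi)) k z}.ncard : ℤ)) :
    mu xi xi = 1 ∧
    (∀ xj ∈ CSet (↑S : Set α) xi, mu xj xi = -1) ∧
    (∀ xj, (xj = xa ∨ xj = xb) → xj ∈ A ∪ B → (∀ y ∈ A ∪ B, ¬xj < y) →
      mu xj xi = η xj - 1) ∧
    (∀ xj, (xj = xa ∨ xj = xb) → xj ∈ A ∪ B → (∃ y ∈ A ∪ B, xj < y) →
      mu xj xi = η xj) ∧
    (∀ xj ∈ A ∪ B, (∃ y ∈ A ∪ B, xj < y) → xj ≠ xa ⊓ xb → mu xj xi = η xj) ∧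
    (¬(xa ≤ xb ∨ xb ≤ xa) → xa ⊓ xb ∈ A ∪ B →
      mu (xa ⊓ xb) xi = η (xa ⊓ xb) + 1) ∧
    (∀ xj ∈ S, xj ≠ xi → xj ∉ meetcl (CSet (↑S : Set α) xi) → mu xj xi = 0) :=
  stmt4_general S hmeet xi hxi A B hchA hchB hAB hno xa xb hxa hxb hab mu hmu1 hmu2 hmu0 η hη
end

section
/- Let S = {x_1, ..., x_n} be a finite GCD-closed set of distinct positive integers. Then the LCM matrix [S] with ij entry lcm(x_i, x_j) factors as [S] = (ΔE) Λ (ΔE)^T, where Δ = diag(x_1,...,x_n), E is the 0-1 matrix with e_{ij} = 1 iff x_j | x_i, and Λ = diag(Ψ(x_1),...,Ψ(x_n)) with Ψ(x_i) = ∑_{x_j | x_i, x_j ∈ S} μ_S(x_j, x_i)/x_j, where μ_S is the Möbius function of the divisibility poset (S, |). -/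
open scoped Classical
open Matrix

theorem stmt6 {n : ℕ} (x : Fin n → ℕ)
    (hpos : ∀ i, 0 < x i) (hmono : StrictMono x)
    (hgcd : ∀ i j, ∃ k, x k = Nat.gcd (x i) (x j))
    -- `mu` is the Möbius function of the divisibility poset `(S, ∣)`
    (mu : Fin n → Fin n → ℤ)
    (hmu1 : ∀ i, mu i i = 1)
    (hmu2 : ∀ j i : Fin n, x j ∣ x i → j ≠ i →
      mu j i = -∑ k ∈ Finset.univ.filter (fun k => x j ∣ x k ∧ k ≠ j ∧ x k ∣ x i), mu k i)
    (hmu0 : ∀ j i : Fin n, ¬x j ∣ x i → mu j i = 0)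
    -- `Ψ(x_i) = ∑_{x_j ∣ x_i} μ_S(x_j, x_i) / x_j`
    (Ψ : Fin n → ℚ)
    (hΨ : ∀ i, Ψ i = ∑ j ∈ Finset.univ.filter (fun j => x j ∣ x i), (mu j i : ℚ) / (x j : ℚ)) :
    (Matrix.of fun i j => (Nat.lcm (x i) (x j) : ℚ)) =
      (Matrix.diagonal (fun i => (x i : ℚ)) *
          Matrix.of (fun i j => if x j ∣ x i then (1 : ℚ) else 0)) *
        Matrix.diagonal Ψ *
        (Matrix.diagonal (fun i => (x i : ℚ)) *
          Matrix.of (fun i j => if x j ∣ x i then (1 : ℚ) else 0))ᵀ := by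
  have hinj : Function.Injective x := hmono.injective
  have hxne : ∀ k, (x k : ℚ) ≠ 0 := fun k => Nat.cast_ne_zero.mpr (hpos k).ne'
  set Z : Matrix (Fin n) (Fin n) ℚ :=
    Matrix.of (fun j k => if x j ∣ x k then (1 : ℚ) else 0) with hZ
  set M : Matrix (Fin n) (Fin n) ℚ := Matrix.of (fun j i => (mu j i : ℚ)) with hM
  have key : ∀ j i, ∑ k, Z j k * M k i
      = ∑ k ∈ Finset.univ.filter (fun k => x j ∣ x k ∧ x k ∣ x i), (mu k i : ℚ) := by
    intro j i
    rw [Finset.sum_filter]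
    apply Finset.sum_congr rfl
    intro k _
    simp only [hZ, hM, Matrix.of_apply]
    by_cases h1 : x j ∣ x k
    · by_cases h2 : x k ∣ x i
      · simp [h1, h2]
      · simp [h1, h2, hmu0 k i h2]
    · simp [h1]
  have hZM : Z * M = 1 := by
    ext j i
    rw [Matrix.mul_apply, key]
    by_cases hji : x j ∣ x i
    · by_cases hjieq : j = i
      · subst hjieq
        have hset : Finset.univ.filter (fun k => x j ∣ x k ∧ x k ∣ x j) = {j} := by
          ext k
          simp only [Finset.mem_filter, Finset.mem_univ, true_and, Finset.mem_singleton]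
          constructor
          · rintro ⟨h1, h2⟩; exact hinj (Nat.dvd_antisymm h2 h1)
          · rintro rfl; exact ⟨dvd_rfl, dvd_rfl⟩
        rw [hset]
        simp [hmu1]
      · have hset : Finset.univ.filter (fun k => x j ∣ x k ∧ x k ∣ x i)
            = insert j (Finset.univ.filter (fun k => x j ∣ x k ∧ k ≠ j ∧ x k ∣ x i)) := by
          ext k
          by_cases hk : k = j
          · simp [hk, hji]
          · simp only [Finset.mem_filter, Finset.mem_univ, true_and, Finset.mem_insert, hk,
              false_or]
            tauto
        rw [hset, Finset.sum_insert (by simp)]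
        have := hmu2 j i hji hjieq
        have hone : (1 : Matrix (Fin n) (Fin n) ℚ) j i = 0 := by
          simp [Matrix.one_apply, hjieq]
        rw [hone]
        push_cast
        rw [this]
        push_cast
        ring
    · have hset : Finset.univ.filter (fun k => x j ∣ x k ∧ x k ∣ x i) = ∅ := by
        ext k
        simp only [Finset.mem_filter, Finset.mem_univ, true_and, Finset.notMem_empty,
          iff_false]
        rintro ⟨h1, h2⟩
        exact hji (h1.trans h2)
      rw [hset]
      have hjieq : j ≠ i := by rintro rfl; exact hji dvd_rfl
      simp [Matrix.one_apply, hjieq]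
  have hMZ : M * Z = 1 := mul_eq_one_comm.mp hZM
  have rowdelta : ∀ j m : Fin n,
      ∑ k ∈ Finset.univ.filter (fun k => x k ∣ x m), (mu j k : ℚ)
        = if j = m then 1 else 0 := by
    intro j m
    have := congrFun (congrFun hMZ j) m
    rw [Matrix.mul_apply] at this
    rw [Finset.sum_filter]
    calc (∑ k, if x k ∣ x m then (mu j k : ℚ) else 0)
        = ∑ k, M j k * Z k m := by
          apply Finset.sum_congr rfl
          intro k _
          simp only [hZ, hM, Matrix.of_apply, mul_ite, mul_one, mul_zero]
      _ = if j = m then 1 else 0 := by rw [this]; simp [Matrix.one_apply]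
  have hΨfull : ∀ k, Ψ k = ∑ j, (mu j k : ℚ) / (x j : ℚ) := by
    intro k
    rw [hΨ]
    apply Finset.sum_subset (Finset.filter_subset _ _)
    intro j _ hj
    simp only [Finset.mem_filter, Finset.mem_univ, true_and] at hj
    simp [hmu0 j k hj]
  have sumΨ : ∀ m, ∑ k ∈ Finset.univ.filter (fun k => x k ∣ x m), Ψ k = 1 / (x m : ℚ) := by
    intro m
    calc ∑ k ∈ Finset.univ.filter (fun k => x k ∣ x m), Ψ k
        = ∑ k ∈ Finset.univ.filter (fun k => x k ∣ x m), ∑ j, (mu j k : ℚ) / (x j : ℚ) := by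
          exact Finset.sum_congr rfl fun k _ => hΨfull k
      _ = ∑ j, ∑ k ∈ Finset.univ.filter (fun k => x k ∣ x m), (mu j k : ℚ) / (x j : ℚ) :=
          Finset.sum_comm
      _ = ∑ j, (∑ k ∈ Finset.univ.filter (fun k => x k ∣ x m), (mu j k : ℚ)) / (x j : ℚ) := by
          simp [Finset.sum_div]
      _ = ∑ j, (if j = m then 1 / (x j : ℚ) else 0) := by
          refine Finset.sum_congr rfl fun j _ => ?_
          rw [rowdelta]
          split <;> simp
      _ = 1 / (x m : ℚ) := by simp
  have hA : ∀ a b : Fin n, (Matrix.diagonal (fun i => (x i : ℚ)) *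
      Matrix.of (fun i j => if x j ∣ x i then (1 : ℚ) else 0)) a b
      = (x a : ℚ) * (if x b ∣ x a then 1 else 0) := by
    intro a b
    rw [Matrix.diagonal_mul]
    rfl
  ext i j
  rw [Matrix.mul_apply]
  simp only [Matrix.mul_diagonal, Matrix.transpose_apply, hA, Matrix.of_apply]
  obtain ⟨g, hg⟩ := hgcd i j
  have hcond : ∀ k, (x k ∣ x i ∧ x k ∣ x j) ↔ x k ∣ x g := by
    intro k; rw [hg]; exact ⟨fun ⟨h1, h2⟩ => Nat.dvd_gcd h1 h2,
      fun h => ⟨h.trans (Nat.gcd_dvd_left _ _), h.trans (Nat.gcd_dvd_right _ _)⟩⟩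
  have hsum : ∑ k, ((x i : ℚ) * (if x k ∣ x i then (1:ℚ) else 0) * Ψ k)
        * ((x j : ℚ) * (if x k ∣ x j then (1:ℚ) else 0))
      = (x i : ℚ) * (x j : ℚ) * (1 / (x g : ℚ)) := by
    rw [← sumΨ g, Finset.mul_sum, Finset.sum_filter]
    apply Finset.sum_congr rfl
    intro k _
    by_cases h1 : x k ∣ x i <;> by_cases h2 : x k ∣ x j
    · rw [if_pos ((hcond k).mp ⟨h1, h2⟩)]; simp [h1, h2]; ring
    · rw [if_neg (fun h => h2 ((hcond k).mpr h).2)]; simp [h2]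
    · rw [if_neg (fun h => h1 ((hcond k).mpr h).1)]; simp [h1]
    · rw [if_neg (fun h => h1 ((hcond k).mpr h).1)]; simp [h1]
  rw [hsum]
  have hgl : (Nat.gcd (x i) (x j) : ℚ) * (Nat.lcm (x i) (x j) : ℚ) = (x i : ℚ) * (x j : ℚ) := by
    exact_mod_cast congrArg (Nat.cast : ℕ → ℚ) (Nat.gcd_mul_lcm (x i) (x j))
  have hgne : (x g : ℚ) ≠ 0 := hxne g
  rw [hg] at hgne ⊢
  field_simp
  linarith [hgl]
end

section
/- Let S be a finite GCD-closed set of positive integers. Then the LCM matrix [S] = (lcm(x_i, x_j)) is invertible if and only if Ψ(x_i) ≠ 0 for all i, where Ψ(x_i) = ∑_{x_j ∈ S, x_j | x_i} μ_S(x_j, x_i)/x_j and μ_S is the Möbius function of (S, |). -/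
open scoped Classical

theorem stmt7 {n : ℕ} (x : Fin n → ℕ)
    (hpos : ∀ i, 0 < x i) (hmono : StrictMono x)
    (hgcd : ∀ i j, ∃ k, x k = Nat.gcd (x i) (x j))
    -- `mu` is the Möbius function of the divisibility poset `(S, ∣)`
    (mu : Fin n → Fin n → ℤ)
    (hmu1 : ∀ i, mu i i = 1)
    (hmu2 : ∀ j i : Fin n, x j ∣ x i → j ≠ i →
      mu j i = -∑ k ∈ Finset.univ.filter (fun k => x j ∣ x k ∧ k ≠ j ∧ x k ∣ x i), mu k i)
    (hmu0 : ∀ j i : Fin n, ¬x j ∣ x i → mu j i = 0)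
    (Ψ : Fin n → ℚ)
    (hΨ : ∀ i, Ψ i = ∑ j ∈ Finset.univ.filter (fun j => x j ∣ x i), (mu j i : ℚ) / (x j : ℚ)) :
    (Matrix.of fun i j => (Nat.lcm (x i) (x j) : ℚ)).det ≠ 0 ↔ ∀ i, Ψ i ≠ 0 := by
  classical
  set Z : Matrix (Fin n) (Fin n) ℚ :=
    Matrix.of (fun j k => if x j ∣ x k then (1 : ℚ) else 0) with hZdef
  set M : Matrix (Fin n) (Fin n) ℚ := Matrix.of (fun j k => (mu j k : ℚ)) with hMdef
  have hdvd_le : ∀ j k : Fin n, x j ∣ x k → j ≤ k := by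
    intro j k h
    by_contra hlt
    push_neg at hlt
    have h1 := Nat.le_of_dvd (hpos k) h
    have h2 := hmono hlt
    omega
  -- Z * M = 1
  have hZM : Z * M = 1 := by
    ext j i
    rw [Matrix.mul_apply, Matrix.one_apply]
    simp only [hZdef, hMdef, Matrix.of_apply, ite_mul, one_mul, zero_mul]
    rw [← Finset.sum_filter]
    have hsub : ∑ k ∈ Finset.univ.filter (fun k => x j ∣ x k ∧ x k ∣ x i), (mu k i : ℚ)
        = ∑ k ∈ Finset.univ.filter (fun k => x j ∣ x k), (mu k i : ℚ) := by
      apply Finset.sum_subset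
      · intro a; simp only [Finset.mem_filter, Finset.mem_univ, true_and]; tauto
      · intro a ha hna
        simp only [Finset.mem_filter, Finset.mem_univ, true_and] at ha hna
        have : ¬ x a ∣ x i := fun h => hna ⟨ha, h⟩
        simp [hmu0 a i this]
    rw [← hsub]
    by_cases hji : j = i
    · subst hji
      have : Finset.univ.filter (fun k => x j ∣ x k ∧ x k ∣ x j) = {j} := by
        ext k
        simp only [Finset.mem_filter, Finset.mem_univ, true_and, Finset.mem_singleton]
        constructor
        · rintro ⟨h1, h2⟩
          exact le_antisymm (hdvd_le _ _ h2) (hdvd_le _ _ h1)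
        · rintro rfl; exact ⟨dvd_rfl, dvd_rfl⟩
      rw [this]
      simp [hmu1]
    · rw [if_neg hji]
      by_cases hdvd : x j ∣ x i
      · have hmem : j ∈ Finset.univ.filter (fun k => x j ∣ x k ∧ x k ∣ x i) := by
          simp [hdvd]
        rw [← Finset.add_sum_erase _ _ hmem]
        have herase : (Finset.univ.filter (fun k => x j ∣ x k ∧ x k ∣ x i)).erase j
            = Finset.univ.filter (fun k => x j ∣ x k ∧ k ≠ j ∧ x k ∣ x i) := by
          ext k
          simp only [Finset.mem_erase, Finset.mem_filter, Finset.mem_univ, true_and]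
          tauto
        rw [herase]
        have := hmu2 j i hdvd hji
        have hcast : (mu j i : ℚ)
            = -∑ k ∈ Finset.univ.filter (fun k => x j ∣ x k ∧ k ≠ j ∧ x k ∣ x i), (mu k i : ℚ) := by
          rw [this]; push_cast; ring
        rw [hcast]; ring
      · have : Finset.univ.filter (fun k => x j ∣ x k ∧ x k ∣ x i) = ∅ := by
          ext k
          simp only [Finset.mem_filter, Finset.mem_univ, true_and, Finset.notMem_empty,
            iff_false]
          rintro ⟨h1, h2⟩
          exact hdvd (h1.trans h2)
        rw [this]
        simp
  have hMZ : M * Z = 1 := mul_eq_one_comm.mp hZM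
  -- dual identity
  have dual : ∀ j m : Fin n,
      (∑ k, (mu j k : ℚ) * (if x k ∣ x m then (1 : ℚ) else 0)) = if j = m then 1 else 0 := by
    intro j m
    have := congrFun (congrFun hMZ j) m
    rw [Matrix.mul_apply, Matrix.one_apply] at this
    simpa [hMdef, hZdef] using this
  -- Ψ as a full sum
  have hΨ' : ∀ k, Ψ k = ∑ j, (mu j k : ℚ) / (x j : ℚ) := by
    intro k
    rw [hΨ, Finset.sum_filter]
    apply Finset.sum_congr rfl
    intro j _
    by_cases h : x j ∣ x k
    · rw [if_pos h]
    · rw [if_neg h, hmu0 j k h]; simp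
  -- the 1/gcd matrix
  have hB : ∀ i j : Fin n, (Z.transpose * (Matrix.diagonal Ψ * Z)) i j
      = 1 / (Nat.gcd (x i) (x j) : ℚ) := by
    intro i j
    obtain ⟨m, hm⟩ := hgcd i j
    rw [Matrix.mul_apply]
    have step : ∀ k, Z.transpose i k * (Matrix.diagonal Ψ * Z) k j
        = (if x k ∣ x m then (1:ℚ) else 0) * Ψ k := by
      intro k
      rw [Matrix.diagonal_mul]
      simp only [Matrix.transpose_apply, hZdef, Matrix.of_apply]
      have : (x k ∣ x i ∧ x k ∣ x j) ↔ x k ∣ x m := by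
        rw [hm, Nat.dvd_gcd_iff]
      by_cases h1 : x k ∣ x i <;> by_cases h2 : x k ∣ x j <;>
        simp [h1, h2, ← this] <;> ring
    rw [Finset.sum_congr rfl (fun k _ => step k)]
    have expand : ∀ k, (if x k ∣ x m then (1:ℚ) else 0) * Ψ k
        = ∑ j', (mu j' k : ℚ) / (x j' : ℚ) * (if x k ∣ x m then (1:ℚ) else 0) := by
      intro k
      rw [hΨ' k, Finset.mul_sum]
      exact Finset.sum_congr rfl fun j' _ => by ring
    rw [Finset.sum_congr rfl (fun k _ => expand k), Finset.sum_comm]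
    have inner : ∀ j', ∑ k, (mu j' k : ℚ) / (x j' : ℚ) * (if x k ∣ x m then (1:ℚ) else 0)
        = (1 / (x j' : ℚ)) * (if j' = m then 1 else 0) := by
      intro j'
      rw [← dual j' m, Finset.mul_sum]
      apply Finset.sum_congr rfl
      intro k _
      ring
    rw [Finset.sum_congr rfl (fun j' _ => inner j')]
    have hsplit : ∀ j' : Fin n, (1 / (x j' : ℚ)) * (if j' = m then 1 else 0)
        = if j' = m then 1 / (x j' : ℚ) else 0 := by
      intro j'; split <;> simp
    rw [Finset.sum_congr rfl (fun j' _ => hsplit j'),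
      Finset.sum_ite_eq' Finset.univ m (fun j' => 1 / (x j' : ℚ))]
    simp [hm]
  -- factorization of the LCM matrix
  have hL : (Matrix.of fun i j => (Nat.lcm (x i) (x j) : ℚ))
      = Matrix.diagonal (fun i => (x i : ℚ)) * (Z.transpose * (Matrix.diagonal Ψ * Z)) *
        Matrix.diagonal (fun i => (x i : ℚ)) := by
    ext i j
    rw [Matrix.mul_diagonal, Matrix.diagonal_mul, hB i j]
    simp only [Matrix.of_apply]
    have hg0 : 0 < Nat.gcd (x i) (x j) := Nat.gcd_pos_of_pos_left _ (hpos i)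
    have hg : ((x i).gcd (x j) : ℚ) ≠ 0 := Nat.cast_ne_zero.mpr hg0.ne'
    have hq : ((x i).gcd (x j) : ℚ) * (Nat.lcm (x i) (x j) : ℚ) = (x i : ℚ) * (x j : ℚ) := by
      exact_mod_cast Nat.gcd_mul_lcm (x i) (x j)
    field_simp
    linear_combination hq
  have hdetZ : Z.det = 1 := by
    have htri : Z.BlockTriangular id := by
      intro i j hij
      simp only [hZdef, Matrix.of_apply, ite_eq_right_iff]
      intro hdvd
      exact absurd (hdvd_le _ _ hdvd) (not_le.mpr hij)
    rw [Matrix.det_of_upperTriangular htri]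
    simp [hZdef]
  have hdetZt : Z.transpose.det = 1 := by rw [Matrix.det_transpose, hdetZ]
  have hxprod : (∏ i, (x i : ℚ)) ≠ 0 := by
    apply Finset.prod_ne_zero_iff.mpr
    intro i _
    exact Nat.cast_ne_zero.mpr (hpos i).ne'
  rw [hL]
  simp only [Matrix.det_mul, Matrix.det_diagonal, hdetZ, hdetZt, mul_one, one_mul]
  constructor
  · intro h i
    intro hΨ0
    apply h
    rw [Finset.prod_eq_zero (Finset.mem_univ i) hΨ0]
    ring
  · intro h
    have : (∏ i, Ψ i) ≠ 0 := Finset.prod_ne_zero_iff.mpr fun i _ => h i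
    exact mul_ne_zero (mul_ne_zero hxprod this) hxprod
end

section
/- Let S be a finite GCD-closed set of positive integers and suppose x_i ∈ S generates a double-chain set in S (i.e., meetcl(C_S(x_i)) \ C_S(x_i), taken in the divisibility order, is a union of two disjoint chains). Then Ψ(x_i) = ∑_{x_j ∈ S, x_j | x_i} μ_S(x_j, x_i)/x_j ≠ 0. Moreover, Ψ(x_i) > 0 if |C_S(x_i)| ≠ 1 and Ψ(x_i) < 0 if |C_S(x_i)| = 1. -/
open scoped Classical

/-- The set of elements of `S` covered by `x` in the divisibility order on `S`. -/
def CSdvd (S : Finset ℕ) (x : ℕ) : Set ℕ :=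
  {y | y ∈ S ∧ x ∈ S ∧ y ∣ x ∧ y ≠ x ∧
    ∀ z ∈ S, y ∣ z → z ∣ x → z = y ∨ z = x}

/-- The gcd-closure of `T`: all gcd's of nonempty finite subsets of `T`. -/
def gcdcl (T : Set ℕ) : Set ℕ :=
  {y | ∃ F : Finset ℕ, F.Nonempty ∧ ↑F ⊆ T ∧ y = F.gcd id}

/-- `x` generates a double-chain set in `S` (with respect to divisibility). -/
def genDCdvd (S : Finset ℕ) (x : ℕ) : Prop :=
  ∃ A B : Set ℕ, Disjoint A B ∧ IsChain (· ∣ ·) A ∧ IsChain (· ∣ ·) B ∧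
    gcdcl (CSdvd S x) \ CSdvd S x = A ∪ B

namespace Stmt8Aux

/-- gcds of nonempty subsets of `C`. -/
noncomputable def Dset (C : Finset ℕ) : Finset ℕ :=
  (C.powerset.filter (fun J => J.Nonempty)).image (fun J => J.gcd id)

noncomputable def wD (C : Finset ℕ) (d : ℕ) : ℤ :=
  ∑ J ∈ C.powerset.filter (fun J => J.Nonempty ∧ J.gcd id = d), (-1 : ℤ) ^ J.card

noncomputable def Uset (C : Finset ℕ) (e : ℕ) : Finset ℕ := C.filter (fun c => e ∣ c)

noncomputable def Egt (C : Finset ℕ) (e : ℕ) : Finset ℕ :=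
  ((Dset C \ C).filter (fun f => e ∣ f)).erase e

noncomputable def PrivC (C : Finset ℕ) (e : ℕ) : Finset ℕ :=
  (Uset C e).filter (fun c => ∀ f ∈ Egt C e, ¬ f ∣ c)

variable {C : Finset ℕ}

lemma mem_Dset {d : ℕ} : d ∈ Dset C ↔ ∃ F : Finset ℕ, F ⊆ C ∧ F.Nonempty ∧ F.gcd id = d := by
  simp only [Dset, Finset.mem_image, Finset.mem_filter, Finset.mem_powerset]
  tauto

lemma C_subset_Dset : C ⊆ Dset C := fun c hc =>
  mem_Dset.2 ⟨{c}, by simpa using hc, ⟨c, by simp⟩, by simp⟩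

lemma Dset_pos (hpos : ∀ c ∈ C, 0 < c) {d : ℕ} (hd : d ∈ Dset C) : 0 < d := by
  obtain ⟨F, hFC, ⟨c, hc⟩, hg⟩ := mem_Dset.1 hd
  rcases Nat.eq_zero_or_pos d with h | h
  case inr => exact h
  · exfalso
    have : ∀ x ∈ F, id x = 0 := Finset.gcd_eq_zero_iff.1 (hg.trans h)
    have := this c hc
    simp only [id] at this
    exact absurd (hpos c (hFC hc)) (by omega)

lemma Uset_subset : Uset C e ⊆ C := Finset.filter_subset _ _

lemma mem_Uset {e c : ℕ} : c ∈ Uset C e ↔ c ∈ C ∧ e ∣ c := Finset.mem_filter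

lemma Uset_nonempty {d : ℕ} (hd : d ∈ Dset C) : (Uset C d).Nonempty := by
  obtain ⟨F, hFC, ⟨c, hc⟩, hg⟩ := mem_Dset.1 hd
  exact ⟨c, mem_Uset.2 ⟨hFC hc, hg ▸ Finset.gcd_dvd hc⟩⟩

lemma Uset_gcd {d : ℕ} (hd : d ∈ Dset C) : (Uset C d).gcd id = d := by
  obtain ⟨F, hFC, hFne, hg⟩ := mem_Dset.1 hd
  subst hg
  have hFU : F ⊆ Uset C (F.gcd id) := fun c hc => mem_Uset.2 ⟨hFC hc, Finset.gcd_dvd hc⟩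
  refine Nat.dvd_antisymm ?_ ?_
  · exact Finset.dvd_gcd (fun c hc => Finset.gcd_dvd (hFU hc))
  · exact Finset.dvd_gcd (fun c hc => (mem_Uset.1 hc).2)

lemma Uset_mono {e f : ℕ} (h : e ∣ f) : Uset C f ⊆ Uset C e := fun c hc =>
  mem_Uset.2 ⟨(mem_Uset.1 hc).1, h.trans (mem_Uset.1 hc).2⟩

/-- P1 as a sum over nonempty subsets of `Uset C e`. -/
lemma sum_wD_filter {e : ℕ} (he : e ∈ Dset C) :
    ∑ f ∈ (Dset C).filter (fun f => e ∣ f), wD C f = -1 := by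
  have h1 : ∀ d : ℕ, wD C d =
      ∑ J ∈ (C.powerset.filter (fun J => J.Nonempty)).filter (fun J => J.gcd id = d),
        (-1 : ℤ) ^ J.card := by
    intro d; rw [Finset.filter_filter]; rfl
  calc ∑ f ∈ (Dset C).filter (fun f => e ∣ f), wD C f
      = ∑ J ∈ (C.powerset.filter (fun J => J.Nonempty)).filter
          (fun J => J.gcd id ∈ (Dset C).filter (fun f => e ∣ f)), (-1 : ℤ) ^ J.card := by
        simp_rw [h1]
        exact Finset.sum_fiberwise_eq_sum_filter _ _ _ _
    _ = ∑ J ∈ (Uset C e).powerset.filter (fun J => J.Nonempty), (-1 : ℤ) ^ J.card := by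
        apply Finset.sum_congr _ (fun _ _ => rfl)
        ext J
        simp only [Finset.mem_filter, Finset.mem_powerset]
        constructor
        · rintro ⟨⟨hJC, hJne⟩, hJD, hedvd⟩
          exact ⟨fun c hc => mem_Uset.2 ⟨hJC hc, hedvd.trans (Finset.gcd_dvd hc)⟩, hJne⟩
        · rintro ⟨hJU, hJne⟩
          have hJC : J ⊆ C := hJU.trans Uset_subset
          exact ⟨⟨hJC, hJne⟩, mem_Dset.2 ⟨J, hJC, hJne, rfl⟩,
            Finset.dvd_gcd (fun c hc => (mem_Uset.1 (hJU hc)).2)⟩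
    _ = -1 := by
        have hne : Uset C e ≠ ∅ := Finset.nonempty_iff_ne_empty.1 (Uset_nonempty he)
        have h0 : (Uset C e).powerset.filter (fun J => ¬ J.Nonempty) = {∅} := by
          ext J
          simp only [Finset.mem_filter, Finset.mem_powerset, Finset.not_nonempty_iff_eq_empty,
            Finset.mem_singleton]
          constructor
          · exact fun h => h.2
          · rintro rfl; exact ⟨Finset.empty_subset _, rfl⟩
        have := Finset.sum_filter_add_sum_filter_not (Uset C e).powerset
          (fun J => J.Nonempty) (fun J => (-1 : ℤ) ^ J.card)
        rw [h0] at this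
        simp only [Finset.sum_singleton, Finset.card_empty, pow_zero] at this
        have h2 : ∑ J ∈ (Uset C e).powerset, (-1 : ℤ) ^ J.card = 0 := by
          rw [Finset.sum_powerset_neg_one_pow_card]; simp [hne]
        omega

lemma wD_cover (hanti : ∀ c₁ ∈ C, ∀ c₂ ∈ C, c₁ ∣ c₂ → c₁ = c₂) {c : ℕ} (hc : c ∈ C) :
    wD C c = -1 := by
  unfold wD
  have : C.powerset.filter (fun J => J.Nonempty ∧ J.gcd id = c) = {{c}} := by
    ext J
    simp only [Finset.mem_filter, Finset.mem_powerset, Finset.mem_singleton]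
    constructor
    · rintro ⟨hJC, hJne, hg⟩
      have hJc : J ⊆ {c} := by
        intro a ha
        have : c ∣ a := hg ▸ Finset.gcd_dvd ha
        have := hanti c hc a (hJC ha) this
        simp [← this]
      rcases Finset.subset_singleton_iff.1 hJc with h | h
      · exact absurd h (Finset.nonempty_iff_ne_empty.1 hJne)
      · exact h
    · rintro rfl
      exact ⟨by simpa using hc, ⟨c, by simp⟩, by simp⟩
  rw [this]
  simp

lemma two_le_card_Uset (he : e ∈ Dset C \ C) : 2 ≤ (Uset C e).card := by
  have heD := (Finset.mem_sdiff.1 he).1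
  have hne := Uset_nonempty heD
  have h1 : 1 ≤ (Uset C e).card := Finset.card_pos.2 hne
  rcases Nat.lt_or_ge (Uset C e).card 2 with h | h
  · exfalso
    have hcard : (Uset C e).card = 1 := by omega
    obtain ⟨c, hc⟩ := Finset.card_eq_one.1 hcard
    have : e = c := by
      have := Uset_gcd heD
      rw [hc] at this
      simpa using this.symm
    have : e ∈ C := by
      have hcC : c ∈ Uset C e := by rw [hc]; simp
      exact this ▸ (mem_Uset.1 hcC).1
    exact (Finset.mem_sdiff.1 he).2 this
  · exact h

/-- I2: the sum of `wD` over multiples of `g` inside `E = Dset \ C`. -/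
lemma sum_wD_E_filter (hanti : ∀ c₁ ∈ C, ∀ c₂ ∈ C, c₁ ∣ c₂ → c₁ = c₂)
    {g : ℕ} (hg : g ∈ Dset C \ C) :
    ∑ f ∈ (Dset C \ C).filter (fun f => g ∣ f), wD C f = ((Uset C g).card : ℤ) - 1 := by
  have hgD := (Finset.mem_sdiff.1 hg).1
  have hsplit : (Dset C).filter (fun f => g ∣ f)
      = Uset C g ∪ (Dset C \ C).filter (fun f => g ∣ f) := by
    ext f
    simp only [Finset.mem_filter, Finset.mem_union, mem_Uset, Finset.mem_sdiff]
    constructor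
    · rintro ⟨hfD, hdvd⟩
      by_cases hfC : f ∈ C
      · exact Or.inl ⟨hfC, hdvd⟩
      · exact Or.inr ⟨⟨hfD, hfC⟩, hdvd⟩
    · rintro (⟨hfC, hdvd⟩ | ⟨⟨hfD, _⟩, hdvd⟩)
      · exact ⟨C_subset_Dset hfC, hdvd⟩
      · exact ⟨hfD, hdvd⟩
  have hdisj : Disjoint (Uset C g) ((Dset C \ C).filter (fun f => g ∣ f)) := by
    rw [Finset.disjoint_left]
    intro a ha ha'
    exact (Finset.mem_sdiff.1 (Finset.mem_filter.1 ha').1).2 (Uset_subset ha)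
  have hP1 := sum_wD_filter hgD
  rw [hsplit, Finset.sum_union hdisj] at hP1
  have hUsum : ∑ f ∈ Uset C g, wD C f = -((Uset C g).card : ℤ) := by
    rw [Finset.sum_congr rfl (fun f hf => wD_cover hanti (Uset_subset hf))]
    simp
  rw [hUsum] at hP1
  linarith


lemma mem_Egt {e f : ℕ} : f ∈ Egt C e ↔ f ≠ e ∧ (f ∈ Dset C \ C ∧ e ∣ f) := by
  simp [Egt, Finset.mem_erase, Finset.mem_filter]

lemma main_bound (hpos : ∀ c ∈ C, 0 < c)
    (hanti : ∀ c₁ ∈ C, ∀ c₂ ∈ C, c₁ ∣ c₂ → c₁ = c₂)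
    {A B : Set ℕ} (hA : IsChain (· ∣ ·) A) (hB : IsChain (· ∣ ·) B)
    (hE : ↑(Dset C \ C) = A ∪ B) {e : ℕ} (he : e ∈ Dset C \ C) :
    0 ≤ wD C e ∧ ((PrivC C e).card : ℤ) ≤ 2 * wD C e := by
  have heD := (Finset.mem_sdiff.1 he).1
  have hmemE : e ∈ (Dset C \ C).filter (fun f => e ∣ f) :=
    Finset.mem_filter.2 ⟨he, dvd_rfl⟩
  have hIe : wD C e + ∑ f ∈ Egt C e, wD C f = ((Uset C e).card : ℤ) - 1 := by
    have h1 := Finset.add_sum_erase _ (wD C) hmemE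
    have h2 := sum_wD_E_filter hanti he
    unfold Egt
    rw [h1, h2]
  -- multiples of an element of Egt are in Egt
  have hrev : ∀ g ∈ Egt C e, ∀ f ∈ Dset C \ C, g ∣ f → f ∈ Egt C e := by
    intro g hg f hf hgf
    obtain ⟨hgne, hgD, heg⟩ := mem_Egt.1 hg
    refine mem_Egt.2 ⟨?_, hf, heg.trans hgf⟩
    rintro rfl
    exact hgne (Nat.dvd_antisymm hgf heg)
  by_cases hEgt : Egt C e = ∅
  · -- e is maximal in E
    have hPriv : PrivC C e = Uset C e := by
      apply Finset.filter_true_of_mem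
      intro c _ f hf
      rw [hEgt] at hf
      exact absurd hf (Finset.notMem_empty f)
    have hu := two_le_card_Uset he
    rw [hEgt, Finset.sum_empty] at hIe
    rw [hPriv]
    omega
  · -- Egt nonempty; build minimal elements
    have hEgtne : (Egt C e).Nonempty := Finset.nonempty_iff_ne_empty.2 hEgt
    set mins := (Egt C e).filter (fun g => ∀ h ∈ Egt C e, h ∣ g → h = g) with hmins_def
    have hminsEgt : mins ⊆ Egt C e := Finset.filter_subset _ _
    have m1 : ∀ f ∈ Egt C e, ∃ g ∈ mins, g ∣ f := by
      intro f hf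
      have hDvne : ((Egt C e).filter (fun h => h ∣ f)).Nonempty :=
        ⟨f, Finset.mem_filter.2 ⟨hf, dvd_rfl⟩⟩
      set g := ((Egt C e).filter (fun h => h ∣ f)).min' hDvne with hgdef
      have hgDv := Finset.min'_mem _ hDvne
      obtain ⟨hgEgt, hgf⟩ := Finset.mem_filter.1 hgDv
      refine ⟨g, Finset.mem_filter.2 ⟨hgEgt, fun h hh hdvd => ?_⟩, hgf⟩
      have hhDv : h ∈ (Egt C e).filter (fun h => h ∣ f) :=
        Finset.mem_filter.2 ⟨hh, hdvd.trans hgf⟩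
      have h1 : g ≤ h := Finset.min'_le _ _ hhDv
      have h2 : h ≤ g := Nat.le_of_dvd (Dset_pos hpos (Finset.mem_sdiff.1 ((mem_Egt.1 hgEgt).2.1)).1) hdvd
      omega
    have hpair : ∀ g₁ ∈ mins, ∀ g₂ ∈ mins, g₁ ∣ g₂ → g₁ = g₂ := by
      intro g₁ h₁ g₂ h₂ hdvd
      exact (Finset.mem_filter.1 h₂).2 g₁ ((Finset.mem_filter.1 h₁).1) hdvd
    have hminsne : mins.Nonempty := by
      obtain ⟨f, hf⟩ := hEgtne
      obtain ⟨g, hg, _⟩ := m1 f hf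
      exact ⟨g, hg⟩
    have hmins_card : mins.card ≤ 2 := by
      by_contra hgt
      push_neg at hgt
      obtain ⟨a, b, c, ha, hb, hc, hab, hac, hbc⟩ := Finset.two_lt_card_iff.1 hgt
      have hmem : ∀ g ∈ mins, (g : ℕ) ∈ A ∪ B := by
        intro g hg
        have hgE : g ∈ Dset C \ C := (mem_Egt.1 (hminsEgt hg)).2.1
        rw [← hE]
        exact Finset.mem_coe.2 hgE
      have noAA : ∀ g₁ ∈ mins, ∀ g₂ ∈ mins, g₁ ≠ g₂ → (g₁:ℕ) ∈ A → (g₂:ℕ) ∈ A → False := by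
        intro g₁ h₁ g₂ h₂ hne u1 u2
        rcases hA u1 u2 (by exact_mod_cast hne) with h | h
        · exact hne (hpair _ h₁ _ h₂ h)
        · exact hne ((hpair _ h₂ _ h₁ h).symm)
      have noBB : ∀ g₁ ∈ mins, ∀ g₂ ∈ mins, g₁ ≠ g₂ → (g₁:ℕ) ∈ B → (g₂:ℕ) ∈ B → False := by
        intro g₁ h₁ g₂ h₂ hne u1 u2
        rcases hB u1 u2 (by exact_mod_cast hne) with h | h
        · exact hne (hpair _ h₁ _ h₂ h)
        · exact hne ((hpair _ h₂ _ h₁ h).symm)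
      rcases hmem a ha with h1 | h1 <;> rcases hmem b hb with h2 | h2 <;>
        rcases hmem c hc with h3 | h3
      · exact noAA a ha b hb hab h1 h2
      · exact noAA a ha b hb hab h1 h2
      · exact noAA a ha c hc hac h1 h3
      · exact noBB b hb c hc hbc h2 h3
      · exact noAA b hb c hc hbc h2 h3
      · exact noBB a ha c hc hac h1 h3
      · exact noBB a ha b hb hab h1 h2
      · exact noBB a ha b hb hab h1 h2
    have hc1 : 1 ≤ mins.card := Finset.card_pos.2 hminsne
    rcases (by omega : mins.card = 1 ∨ mins.card = 2) with h1 | h2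
    · -- one minimal element a'
      obtain ⟨a', ha'⟩ := Finset.card_eq_one.1 h1
      have ha'mins : a' ∈ mins := by rw [ha']; simp
      have ha'Egt : a' ∈ Egt C e := hminsEgt ha'mins
      obtain ⟨ha'ne, ha'D, hea'⟩ := mem_Egt.1 ha'Egt
      have hEgt_eq : Egt C e = (Dset C \ C).filter (fun f => a' ∣ f) := by
        ext f
        constructor
        · intro hf
          obtain ⟨g, hg, hgf⟩ := m1 f hf
          rw [ha'] at hg
          simp only [Finset.mem_singleton] at hg
          subst hg
          exact Finset.mem_filter.2 ⟨(mem_Egt.1 hf).2.1, hgf⟩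
        · intro hf
          obtain ⟨hfD, ha'f⟩ := Finset.mem_filter.1 hf
          exact hrev a' ha'Egt f hfD ha'f
      have hSE : ∑ f ∈ Egt C e, wD C f = ((Uset C a').card : ℤ) - 1 := by
        rw [hEgt_eq]
        exact sum_wD_E_filter hanti ha'D
      have hPriv : PrivC C e = Uset C e \ Uset C a' := by
        ext c
        simp only [PrivC, Finset.mem_filter, Finset.mem_sdiff]
        constructor
        · rintro ⟨hcU, hall⟩
          refine ⟨hcU, fun hc' => hall a' ha'Egt (mem_Uset.1 hc').2⟩
        · rintro ⟨hcU, hnot⟩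
          refine ⟨hcU, fun f hf hfc => hnot ?_⟩
          have ha'f : a' ∣ f := (Finset.mem_filter.1 (hEgt_eq ▸ hf)).2
          exact mem_Uset.2 ⟨(mem_Uset.1 hcU).1, ha'f.trans hfc⟩
      have hsub : Uset C a' ⊆ Uset C e := Uset_mono hea'
      have hcs := Finset.card_sdiff_add_card_eq_card hsub
      rw [hPriv]
      omega
    · -- two minimal elements a', b'
      obtain ⟨a', b', hne, hab⟩ := Finset.card_eq_two.1 h2
      have ha'mins : a' ∈ mins := by rw [hab]; simp
      have hb'mins : b' ∈ mins := by rw [hab]; simp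
      have ha'Egt : a' ∈ Egt C e := hminsEgt ha'mins
      have hb'Egt : b' ∈ Egt C e := hminsEgt hb'mins
      obtain ⟨ha'ne, ha'D, hea'⟩ := mem_Egt.1 ha'Egt
      obtain ⟨hb'ne, hb'D, heb'⟩ := mem_Egt.1 hb'Egt
      have cover : ∀ f ∈ Egt C e, a' ∣ f ∨ b' ∣ f := by
        intro f hf
        obtain ⟨g, hg, hgf⟩ := m1 f hf
        rw [hab] at hg
        rcases Finset.mem_insert.1 hg with h | h
        · subst h; exact Or.inl hgf
        · simp only [Finset.mem_singleton] at h; subst h; exact Or.inr hgf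
      have hEgt_eq : Egt C e = (Dset C \ C).filter (fun f => a' ∣ f)
          ∪ (Dset C \ C).filter (fun f => b' ∣ f) := by
        ext f
        simp only [Finset.mem_union, Finset.mem_filter]
        constructor
        · intro hf
          rcases cover f hf with h | h
          · exact Or.inl ⟨(mem_Egt.1 hf).2.1, h⟩
          · exact Or.inr ⟨(mem_Egt.1 hf).2.1, h⟩
        · rintro (⟨hfD, hdvd⟩ | ⟨hfD, hdvd⟩)
          · exact hrev a' ha'Egt f hfD hdvd
          · exact hrev b' hb'Egt f hfD hdvd
      have hsumUI : ∑ f ∈ (Dset C \ C).filter (fun f => a' ∣ f) ∪ (Dset C \ C).filter (fun f => b' ∣ f), wD C f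
          + ∑ f ∈ (Dset C \ C).filter (fun f => a' ∣ f) ∩ (Dset C \ C).filter (fun f => b' ∣ f), wD C f
          = ∑ f ∈ (Dset C \ C).filter (fun f => a' ∣ f), wD C f
          + ∑ f ∈ (Dset C \ C).filter (fun f => b' ∣ f), wD C f := Finset.sum_union_inter
      have hSa := sum_wD_E_filter hanti ha'D
      have hSb := sum_wD_E_filter hanti hb'D
      have hinter : (Dset C \ C).filter (fun f => a' ∣ f) ∩ (Dset C \ C).filter (fun f => b' ∣ f)
          = (Dset C \ C).filter (fun f => a' ∣ f ∧ b' ∣ f) := (Finset.filter_and _ _ _).symm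
      have hPriv : PrivC C e = Uset C e \ (Uset C a' ∪ Uset C b') := by
        ext c
        simp only [PrivC, Finset.mem_filter, Finset.mem_sdiff, Finset.mem_union]
        constructor
        · rintro ⟨hcU, hall⟩
          refine ⟨hcU, fun hc' => ?_⟩
          rcases hc' with hc' | hc'
          · exact hall a' ha'Egt (mem_Uset.1 hc').2
          · exact hall b' hb'Egt (mem_Uset.1 hc').2
        · rintro ⟨hcU, hnot⟩
          refine ⟨hcU, fun f hf hfc => hnot ?_⟩
          rcases cover f hf with h | h
          · exact Or.inl (mem_Uset.2 ⟨(mem_Uset.1 hcU).1, h.trans hfc⟩)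
          · exact Or.inr (mem_Uset.2 ⟨(mem_Uset.1 hcU).1, h.trans hfc⟩)
      have hsubU : Uset C a' ∪ Uset C b' ⊆ Uset C e :=
        Finset.union_subset (Uset_mono hea') (Uset_mono heb')
      have hcs := Finset.card_sdiff_add_card_eq_card hsubU
      have hcui := Finset.card_union_add_card_inter (Uset C a') (Uset C b')
      -- the intersection of cover sets
      have hUIff : ∀ f ∈ Dset C, (a' ∣ f ∧ b' ∣ f) → Uset C f ⊆ Uset C a' ∩ Uset C b' := by
        intro f _ hdvd c hc
        exact Finset.mem_inter.2 ⟨mem_Uset.2 ⟨(mem_Uset.1 hc).1, hdvd.1.trans (mem_Uset.1 hc).2⟩,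
          mem_Uset.2 ⟨(mem_Uset.1 hc).1, hdvd.2.trans (mem_Uset.1 hc).2⟩⟩
      -- establish per-subcase values of SFab and (IU).card
      have key : ∃ SFab : ℤ, ∑ f ∈ (Dset C \ C).filter (fun f => a' ∣ f ∧ b' ∣ f), wD C f = SFab
          ∧ ((Uset C a' ∩ Uset C b').card : ℤ) - 1 ≤ SFab ∧ SFab ≤ ((Uset C a' ∩ Uset C b').card : ℤ) := by
        by_cases hIU : Uset C a' ∩ Uset C b' = ∅
        · refine ⟨0, ?_, by simp [hIU], by simp [hIU]⟩
          have : (Dset C \ C).filter (fun f => a' ∣ f ∧ b' ∣ f) = ∅ := by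
            rw [Finset.eq_empty_iff_forall_notMem]
            intro f hf
            obtain ⟨hfD, hdvd⟩ := Finset.mem_filter.1 hf
            obtain ⟨c, hc⟩ := Uset_nonempty (Finset.mem_sdiff.1 hfD).1
            have := hUIff f (Finset.mem_sdiff.1 hfD).1 hdvd hc
            rw [hIU] at this
            exact absurd this (Finset.notMem_empty c)
          rw [this, Finset.sum_empty]
        · have hIUne : (Uset C a' ∩ Uset C b').Nonempty := Finset.nonempty_iff_ne_empty.2 hIU
          set m₂ := (Uset C a' ∩ Uset C b').gcd id with hm2def
          have hIUC : Uset C a' ∩ Uset C b' ⊆ C :=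
            (Finset.inter_subset_left).trans Uset_subset
          have hm2D : m₂ ∈ Dset C := mem_Dset.2 ⟨_, hIUC, hIUne, rfl⟩
          have ham : a' ∣ m₂ :=
            Finset.dvd_gcd (fun c hc => (mem_Uset.1 (Finset.mem_inter.1 hc).1).2)
          have hbm : b' ∣ m₂ :=
            Finset.dvd_gcd (fun c hc => (mem_Uset.1 (Finset.mem_inter.1 hc).2).2)
          have hUM : Uset C m₂ = Uset C a' ∩ Uset C b' := by
            ext c
            constructor
            · intro hc
              exact Finset.mem_inter.2 ⟨mem_Uset.2 ⟨(mem_Uset.1 hc).1, ham.trans (mem_Uset.1 hc).2⟩,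
                mem_Uset.2 ⟨(mem_Uset.1 hc).1, hbm.trans (mem_Uset.1 hc).2⟩⟩
            · intro hc
              exact mem_Uset.2 ⟨hIUC hc, Finset.gcd_dvd hc⟩
          have hFab : (Dset C \ C).filter (fun f => a' ∣ f ∧ b' ∣ f)
              = (Dset C \ C).filter (fun f => m₂ ∣ f) := by
            ext f
            simp only [Finset.mem_filter]
            constructor
            · rintro ⟨hfD, hdvd⟩
              refine ⟨hfD, ?_⟩
              have hsub2 := hUIff f (Finset.mem_sdiff.1 hfD).1 hdvd
              have : m₂ ∣ (Uset C f).gcd id :=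
                Finset.dvd_gcd (fun c hc => Finset.gcd_dvd (hsub2 hc))
              rwa [Uset_gcd (Finset.mem_sdiff.1 hfD).1] at this
            · rintro ⟨hfD, hdvd⟩
              exact ⟨hfD, ham.trans hdvd, hbm.trans hdvd⟩
          by_cases hm2C : m₂ ∈ C
          · have hFab0 : (Dset C \ C).filter (fun f => m₂ ∣ f) = ∅ := by
              rw [Finset.eq_empty_iff_forall_notMem]
              intro f hf
              obtain ⟨hfD, hdvd⟩ := Finset.mem_filter.1 hf
              obtain ⟨c₀, hc₀⟩ := Uset_nonempty (Finset.mem_sdiff.1 hfD).1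
              have hfc₀ : f ∣ c₀ := (mem_Uset.1 hc₀).2
              have hm2c₀ : m₂ = c₀ := hanti m₂ hm2C c₀ (Uset_subset hc₀) (hdvd.trans hfc₀)
              have : f = m₂ := Nat.dvd_antisymm (hm2c₀ ▸ hfc₀) hdvd
              exact (Finset.mem_sdiff.1 hfD).2 (this ▸ hm2C)
            have hIU1 : (Uset C a' ∩ Uset C b').card = 1 := by
              rw [← hUM]
              rw [Finset.card_eq_one]
              refine ⟨m₂, ?_⟩
              ext c
              simp only [Finset.mem_singleton]
              constructor
              · intro hc
                exact (hanti m₂ hm2C c (Uset_subset hc) (mem_Uset.1 hc).2).symm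
              · rintro rfl
                exact mem_Uset.2 ⟨hm2C, dvd_rfl⟩
            refine ⟨0, by rw [hFab, hFab0, Finset.sum_empty], by rw [hIU1]; norm_num,
              by rw [hIU1]; norm_num⟩
          · have hm2E : m₂ ∈ Dset C \ C := Finset.mem_sdiff.2 ⟨hm2D, hm2C⟩
            have := sum_wD_E_filter hanti hm2E
            rw [hUM] at this
            refine ⟨((Uset C a' ∩ Uset C b').card : ℤ) - 1, by rw [hFab]; exact this, le_refl _, by omega⟩
      obtain ⟨SFab, hSFab, hlo, hhi⟩ := key
      rw [hEgt_eq] at hIe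
      rw [hinter, hSFab, hSa, hSb] at hsumUI
      rw [hPriv]
      -- hsumUI : ∑_{union} + SFab = (ua'-1) + (ub'-1)
      omega

lemma charge (hpos : ∀ c ∈ C, 0 < c)
    (hanti : ∀ c₁ ∈ C, ∀ c₂ ∈ C, c₁ ∣ c₂ → c₁ = c₂)
    {A B : Set ℕ} (hA : IsChain (· ∣ ·) A) (hB : IsChain (· ∣ ·) B)
    (hE : ↑(Dset C \ C) = A ∪ B) (hcard : 2 ≤ C.card) :
    ∑ c ∈ C, (1 : ℚ)/c ≤ ∑ e ∈ Dset C \ C, (wD C e : ℚ)/e := by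
  have hEdivne : ∀ c ∈ C, ((Dset C \ C).filter (fun f => f ∣ c)).Nonempty := by
    intro c hc
    obtain ⟨c', hc', hne⟩ := Finset.exists_mem_ne hcard c
    refine ⟨Nat.gcd c c', Finset.mem_filter.2 ⟨Finset.mem_sdiff.2 ⟨?_, ?_⟩, Nat.gcd_dvd_left _ _⟩⟩
    · refine mem_Dset.2 ⟨{c, c'}, ?_, ⟨c, by simp⟩,
        by simp [Finset.gcd_insert, Finset.gcd_singleton, gcd_eq_nat_gcd]⟩
      intro x hx
      simp only [Finset.mem_insert, Finset.mem_singleton] at hx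
      rcases hx with rfl | rfl <;> assumption
    · intro hgC
      have h1 := hanti _ hgC c hc (Nat.gcd_dvd_left _ _)
      have h2 := hanti _ hgC c' hc' (Nat.gcd_dvd_right _ _)
      exact hne (h2.symm.trans h1)
  classical
  set φ : ℕ → ℕ := fun c => if h : ((Dset C \ C).filter (fun f => f ∣ c)).Nonempty
      then ((Dset C \ C).filter (fun f => f ∣ c)).max' h else 0 with hφ
  have hφeq : ∀ c (hc : c ∈ C), φ c = ((Dset C \ C).filter (fun f => f ∣ c)).max' (hEdivne c hc) := by
    intro c hc
    rw [hφ]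
    simp only
    rw [dif_pos (hEdivne c hc)]
  have hφmem : ∀ c ∈ C, φ c ∈ (Dset C \ C).filter (fun f => f ∣ c) := by
    intro c hc
    rw [hφeq c hc]
    exact Finset.max'_mem _ _
  have hmaps : ∀ c ∈ C, φ c ∈ Dset C \ C := fun c hc => (Finset.mem_filter.1 (hφmem c hc)).1
  rw [← Finset.sum_fiberwise_of_maps_to hmaps (fun c => (1:ℚ)/c)]
  apply Finset.sum_le_sum
  intro e he
  have hepos : 0 < e := Dset_pos hpos (Finset.mem_sdiff.1 he).1
  have hfiber : (C.filter (fun c => φ c = e)) ⊆ PrivC C e := by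
    intro c hcf
    obtain ⟨hc, hφc⟩ := Finset.mem_filter.1 hcf
    have hmem := hφmem c hc
    rw [hφc] at hmem
    have hedvd : e ∣ c := (Finset.mem_filter.1 hmem).2
    refine Finset.mem_filter.2 ⟨mem_Uset.2 ⟨hc, hedvd⟩, ?_⟩
    intro f hf hfc
    obtain ⟨hfne, hfD, hef⟩ := mem_Egt.1 hf
    have hfmem : f ∈ (Dset C \ C).filter (fun g => g ∣ c) := Finset.mem_filter.2 ⟨hfD, hfc⟩
    have h1 : f ≤ e := by
      have := Finset.le_max' _ f hfmem
      rwa [← hφeq c hc, hφc] at this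
    have h2 : e ≤ f := Nat.le_of_dvd (Dset_pos hpos (Finset.mem_sdiff.1 hfD).1) hef
    exact hfne (by omega)
  have hwb := main_bound hpos hanti hA hB hE he
  have hcb : ∀ c ∈ C.filter (fun c => φ c = e), (1:ℚ)/c ≤ 1/(2*e) := by
    intro c hcf
    obtain ⟨hc, hφc⟩ := Finset.mem_filter.1 hcf
    have hmem := hφmem c hc
    rw [hφc] at hmem
    have hedvd : e ∣ c := (Finset.mem_filter.1 hmem).2
    have hcpos := hpos c hc
    have hce : c ≠ e := by
      rintro rfl
      exact (Finset.mem_sdiff.1 he).2 hc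
    obtain ⟨k, hk⟩ := hedvd
    have hk2 : 2 ≤ k := by
      rcases Nat.lt_or_ge k 2 with h | h
      · interval_cases k <;> omega
      · exact h
    have h2ec : 2*e ≤ c := by
      rw [hk]
      calc 2*e = e*2 := by ring
        _ ≤ e*k := Nat.mul_le_mul_left e hk2
    apply one_div_le_one_div_of_le
    · positivity
    · exact_mod_cast h2ec
  calc ∑ c ∈ C.filter (fun c => φ c = e), (1:ℚ)/c
      ≤ (C.filter (fun c => φ c = e)).card • ((1:ℚ)/(2*e)) :=
        Finset.sum_le_card_nsmul _ _ _ hcb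
    _ = ((C.filter (fun c => φ c = e)).card : ℚ) * (1/(2*e)) := by
        rw [nsmul_eq_mul]
    _ ≤ ((2 * wD C e : ℤ) : ℚ) * (1/(2*e)) := by
        apply mul_le_mul_of_nonneg_right _ (by positivity)
        have hcc : (C.filter (fun c => φ c = e)).card ≤ (PrivC C e).card :=
          Finset.card_le_card hfiber
        have h2' : ((PrivC C e).card : ℚ) ≤ 2 * (wD C e : ℚ) := by exact_mod_cast hwb.2
        have h1' : ((C.filter (fun c => φ c = e)).card : ℚ) ≤ ((PrivC C e).card : ℚ) := by
          exact_mod_cast hcc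
        push_cast
        linarith
    _ = (wD C e : ℚ)/e := by
        have : (e:ℚ) ≠ 0 := by positivity
        push_cast
        field_simp

section Part1

variable (S : Finset ℕ) (xi : ℕ)

noncomputable def CfinD : Finset ℕ :=
  S.filter (fun y => y ∣ xi ∧ y ≠ xi ∧ ∀ z ∈ S, y ∣ z → z ∣ xi → z = y ∨ z = xi)

noncomputable def gcdx (J : Finset ℕ) : ℕ := Nat.gcd (J.gcd id) xi

noncomputable def nu (y : ℕ) : ℤ :=
  ∑ J ∈ (CfinD S xi).powerset.filter (fun J => gcdx xi J = y), (-1 : ℤ) ^ J.card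

variable {S : Finset ℕ} {xi : ℕ}

lemma gcd_mem_S (hg : ∀ a ∈ S, ∀ b ∈ S, Nat.gcd a b ∈ S)
    {F : Finset ℕ} (hne : F.Nonempty) (hsub : F ⊆ S) : F.gcd id ∈ S := by
  induction hne using Finset.Nonempty.cons_induction with
  | singleton a => simpa using hsub (by simp)
  | cons a s ha hs ih =>
    rw [Finset.cons_eq_insert, Finset.gcd_insert, gcd_eq_nat_gcd]
    exact hg a (hsub (by simp)) _ (ih (fun x hx => hsub (by simp [hx])))

lemma mem_CfinD {y : ℕ} : y ∈ CfinD S xi ↔ y ∈ S ∧ y ∣ xi ∧ y ≠ xi ∧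
    ∀ z ∈ S, y ∣ z → z ∣ xi → z = y ∨ z = xi := Finset.mem_filter

lemma CfinD_subset : CfinD S xi ⊆ S := Finset.filter_subset _ _

/-- every proper `S`-divisor of `xi` divides some cover -/
lemma exists_cover (h0 : 0 ∉ S) {y : ℕ} (hy : y ∈ S) (hdvd : y ∣ xi) (hne : y ≠ xi) :
    ∃ z ∈ CfinD S xi, y ∣ z := by
  have hSpos : ∀ w ∈ S, 0 < w := by
    intro w hw
    rcases Nat.eq_zero_or_pos w with h | h
    · exact absurd (h ▸ hw) h0
    · exact h
  have hT : (S.filter (fun z => y ∣ z ∧ z ∣ xi ∧ z ≠ xi)).Nonempty :=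
    ⟨y, Finset.mem_filter.2 ⟨hy, dvd_rfl, hdvd, hne⟩⟩
  obtain ⟨z, hzT, hzmax⟩ := Finset.exists_max_image _ id hT
  obtain ⟨hzS, hyz, hzxi, hzne⟩ := Finset.mem_filter.1 hzT
  refine ⟨z, mem_CfinD.2 ⟨hzS, hzxi, hzne, ?_⟩, hyz⟩
  intro w hw hzw hwxi
  by_cases hwne : w = xi
  · exact Or.inr hwne
  · left
    have hwT : w ∈ S.filter (fun z => y ∣ z ∧ z ∣ xi ∧ z ≠ xi) :=
      Finset.mem_filter.2 ⟨hw, hyz.trans hzw, hwxi, hwne⟩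
    have h1 : w ≤ z := by simpa using hzmax w hwT
    have h2 : z ≤ w := Nat.le_of_dvd (hSpos w hw) hzw
    exact (by omega : w = z)

lemma gcdx_mem (hg : ∀ a ∈ S, ∀ b ∈ S, Nat.gcd a b ∈ S) (hxi : xi ∈ S)
    {J : Finset ℕ} (hJ : J ⊆ CfinD S xi) : gcdx xi J ∈ S := by
  rcases Finset.eq_empty_or_nonempty J with rfl | hne
  · simpa [gcdx] using hxi
  · exact hg _ (gcd_mem_S hg hne (hJ.trans CfinD_subset)) _ hxi

lemma gcdx_dvd {J : Finset ℕ} : gcdx xi J ∣ xi := Nat.gcd_dvd_right _ _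

lemma dvd_gcdx_iff {y : ℕ} (hyxi : y ∣ xi) {J : Finset ℕ} :
    y ∣ gcdx xi J ↔ ∀ c ∈ J, y ∣ c := by
  constructor
  · intro h c hc
    exact ((h.trans (Nat.gcd_dvd_left _ _)).trans (Finset.gcd_dvd hc))
  · intro h
    exact Nat.dvd_gcd (Finset.dvd_gcd h) hyxi

lemma mu_eq_nu (h0 : 0 ∉ S) (hg : ∀ a ∈ S, ∀ b ∈ S, Nat.gcd a b ∈ S) (hxi : xi ∈ S)
    (mu : ℕ → ℕ → ℤ) (hmu1 : ∀ a, mu a a = 1)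
    (hmu2 : ∀ b ∈ S, ∀ a ∈ S, b ∣ a → b ≠ a →
      mu b a = -∑ c ∈ S.filter (fun c => b ∣ c ∧ c ≠ b ∧ c ∣ a), mu c a) :
    ∀ y ∈ S, y ∣ xi → mu y xi = nu S xi y := by
  have key : ∀ k : ℕ, ∀ y ∈ S, y ∣ xi →
      (S.filter (fun z => y ∣ z ∧ z ∣ xi)).card ≤ k → mu y xi = nu S xi y := by
    intro k
    induction k with
    | zero =>
      intro y hy hdvd hcard
      exfalso
      have : y ∈ S.filter (fun z => y ∣ z ∧ z ∣ xi) := Finset.mem_filter.2 ⟨hy, dvd_rfl, hdvd⟩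
      have := Finset.card_pos.2 ⟨y, this⟩
      omega
    | succ k ih =>
      intro y hy hdvd hcard
      by_cases hyx : y = xi
      · subst hyx
        rw [hmu1]
        have : (CfinD S y).powerset.filter (fun J => gcdx y J = y) = {∅} := by
          ext J
          simp only [Finset.mem_filter, Finset.mem_powerset, Finset.mem_singleton]
          constructor
          · rintro ⟨hJC, hgx⟩
            rw [Finset.eq_empty_iff_forall_notMem]
            intro c hc
            have h1 : y ∣ gcdx y J := by rw [hgx]
            have h2 : y ∣ c := (dvd_gcdx_iff dvd_rfl).1 h1 c hc
            have := mem_CfinD.1 (hJC hc)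
            exact this.2.2.1 (Nat.dvd_antisymm this.2.1 h2)
          · rintro rfl
            exact ⟨Finset.empty_subset _, by simp [gcdx]⟩
        rw [nu, this]
        simp
      · have hrec := hmu2 y hy xi hxi hdvd hyx
        have hstep : ∀ c ∈ S.filter (fun c => y ∣ c ∧ c ≠ y ∧ c ∣ xi), mu c xi = nu S xi c := by
          intro c hcf
          obtain ⟨hcS, hyc, hcy, hcxi⟩ := Finset.mem_filter.1 hcf
          apply ih c hcS hcxi
          have hsub : S.filter (fun z => c ∣ z ∧ z ∣ xi)
              ⊆ (S.filter (fun z => y ∣ z ∧ z ∣ xi)).erase y := by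
            intro w hw
            obtain ⟨hwS, hcw, hwxi⟩ := Finset.mem_filter.1 hw
            refine Finset.mem_erase.2 ⟨?_, Finset.mem_filter.2 ⟨hwS, hyc.trans hcw, hwxi⟩⟩
            rintro rfl
            exact hcy (Nat.dvd_antisymm hcw hyc)
          have h1 := Finset.card_le_card hsub
          have h2 : y ∈ S.filter (fun z => y ∣ z ∧ z ∣ xi) :=
            Finset.mem_filter.2 ⟨hy, dvd_rfl, hdvd⟩
          have h3 := Finset.card_erase_of_mem h2
          have h4 := Finset.card_pos.2 ⟨y, h2⟩
          omega
        rw [hrec]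
        have h5 : ∑ c ∈ S.filter (fun c => y ∣ c ∧ c ≠ y ∧ c ∣ xi), mu c xi
            = ∑ c ∈ S.filter (fun c => y ∣ c ∧ c ≠ y ∧ c ∣ xi), nu S xi c :=
          Finset.sum_congr rfl hstep
        rw [h5]
        -- show total sum of nu over interval is 0
        have hins : S.filter (fun z => y ∣ z ∧ z ∣ xi)
            = insert y (S.filter (fun c => y ∣ c ∧ c ≠ y ∧ c ∣ xi)) := by
          ext z
          simp only [Finset.mem_filter, Finset.mem_insert]
          constructor
          · rintro ⟨hzS, hyz, hzxi⟩
            by_cases h : z = y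
            · exact Or.inl h
            · exact Or.inr ⟨hzS, hyz, h, hzxi⟩
          · rintro (rfl | ⟨hzS, hyz, _, hzxi⟩)
            · exact ⟨hy, dvd_rfl, hdvd⟩
            · exact ⟨hzS, hyz, hzxi⟩
        have hnotmem : y ∉ S.filter (fun c => y ∣ c ∧ c ≠ y ∧ c ∣ xi) := by
          simp
        have hsum0 : ∑ z ∈ S.filter (fun z => y ∣ z ∧ z ∣ xi), nu S xi z = 0 := by
          have hfib : ∑ z ∈ S.filter (fun z => y ∣ z ∧ z ∣ xi), nu S xi z
              = ∑ J ∈ (CfinD S xi).powerset.filter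
                  (fun J => gcdx xi J ∈ S.filter (fun z => y ∣ z ∧ z ∣ xi)), (-1:ℤ)^J.card := by
            unfold nu
            exact Finset.sum_fiberwise_eq_sum_filter _ _ _ _
          rw [hfib]
          have heq : (CfinD S xi).powerset.filter
              (fun J => gcdx xi J ∈ S.filter (fun z => y ∣ z ∧ z ∣ xi))
              = ((CfinD S xi).filter (fun c => y ∣ c)).powerset := by
            ext J
            simp only [Finset.mem_filter, Finset.mem_powerset]
            constructor
            · rintro ⟨hJC, _, hygx, _⟩
              intro c hc
              exact Finset.mem_filter.2 ⟨hJC hc, (dvd_gcdx_iff hdvd).1 hygx c hc⟩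
            · intro hJU
              have hJC : J ⊆ CfinD S xi := hJU.trans (Finset.filter_subset _ _)
              exact ⟨hJC, gcdx_mem hg hxi hJC,
                (dvd_gcdx_iff hdvd).2 (fun c hc => (Finset.mem_filter.1 (hJU hc)).2), gcdx_dvd⟩
          rw [heq, Finset.sum_powerset_neg_one_pow_card]
          obtain ⟨z, hz, hyz⟩ := exists_cover h0 hy hdvd hyx
          have : (CfinD S xi).filter (fun c => y ∣ c) ≠ ∅ :=
            Finset.nonempty_iff_ne_empty.1 ⟨z, Finset.mem_filter.2 ⟨hz, hyz⟩⟩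
          simp [this]
        rw [hins, Finset.sum_insert hnotmem] at hsum0
        linarith
  intro y hy hdvd
  exact key _ y hy hdvd le_rfl

end Part1

lemma Psi_formula {S : Finset ℕ} {xi : ℕ} (h0 : 0 ∉ S)
    (hg : ∀ a ∈ S, ∀ b ∈ S, Nat.gcd a b ∈ S) (hxi : xi ∈ S)
    (mu : ℕ → ℕ → ℤ) (hmu1 : ∀ a, mu a a = 1)
    (hmu2 : ∀ b ∈ S, ∀ a ∈ S, b ∣ a → b ≠ a →
      mu b a = -∑ c ∈ S.filter (fun c => b ∣ c ∧ c ≠ b ∧ c ∣ a), mu c a)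
    (Ψ : ℕ → ℚ)
    (hΨ : ∀ a, Ψ a = ∑ b ∈ S.filter (fun b => b ∣ a), (mu b a : ℚ) / (b : ℚ)) :
    Ψ xi = 1/(xi:ℚ) + ∑ d ∈ Dset (CfinD S xi), (wD (CfinD S xi) d : ℚ)/(d:ℚ) := by
  have hmn := mu_eq_nu h0 hg hxi mu hmu1 hmu2
  rw [hΨ xi]
  have e1 : ∑ b ∈ S.filter (fun b => b ∣ xi), (mu b xi : ℚ)/(b:ℚ)
      = ∑ b ∈ S.filter (fun b => b ∣ xi), ((nu S xi b : ℚ))/(b:ℚ) := by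
    apply Finset.sum_congr rfl
    intro b hb
    obtain ⟨hbS, hbd⟩ := Finset.mem_filter.1 hb
    rw [hmn b hbS hbd]
  rw [e1]
  have e2 : ∀ b ∈ S.filter (fun b => b ∣ xi), ((nu S xi b : ℚ))/(b:ℚ)
      = ∑ J ∈ (CfinD S xi).powerset.filter (fun J => gcdx xi J = b),
          (-1:ℚ)^J.card / (gcdx xi J : ℚ) := by
    intro b hb
    rw [nu]
    push_cast
    rw [Finset.sum_div]
    apply Finset.sum_congr rfl
    intro J hJ
    rw [(Finset.mem_filter.1 hJ).2]
  rw [Finset.sum_congr rfl e2]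
  rw [Finset.sum_fiberwise_eq_sum_filter]
  have e3 : (CfinD S xi).powerset.filter (fun J => gcdx xi J ∈ S.filter (fun b => b ∣ xi))
      = (CfinD S xi).powerset := by
    apply Finset.filter_true_of_mem
    intro J hJ
    exact Finset.mem_filter.2 ⟨gcdx_mem hg hxi (Finset.mem_powerset.1 hJ), gcdx_dvd⟩
  rw [e3]
  have e4 : (CfinD S xi).powerset
      = insert ∅ ((CfinD S xi).powerset.filter (fun J => J.Nonempty)) := by
    ext J
    simp only [Finset.mem_insert, Finset.mem_filter, Finset.mem_powerset]
    constructor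
    · intro h
      rcases Finset.eq_empty_or_nonempty J with rfl | hne
      · exact Or.inl rfl
      · exact Or.inr ⟨h, hne⟩
    · rintro (rfl | ⟨h, _⟩)
      · exact Finset.empty_subset _
      · exact h
  rw [e4, Finset.sum_insert (by simp)]
  congr 1
  · simp [gcdx]
  · have e5 : ∀ J ∈ (CfinD S xi).powerset.filter (fun J => J.Nonempty),
        (-1:ℚ)^J.card / (gcdx xi J : ℚ) = (-1:ℚ)^J.card / ((J.gcd id : ℕ) : ℚ) := by
      intro J hJ
      obtain ⟨hJC, hne⟩ := Finset.mem_filter.1 hJ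
      obtain ⟨c, hc⟩ := hne
      have : J.gcd id ∣ xi :=
        (Finset.gcd_dvd hc).trans (mem_CfinD.1 ((Finset.mem_powerset.1 hJC) hc)).2.1
      rw [gcdx, Nat.gcd_eq_left this]
    rw [Finset.sum_congr rfl e5]
    have hmaps : ∀ J ∈ (CfinD S xi).powerset.filter (fun J => J.Nonempty),
        J.gcd id ∈ Dset (CfinD S xi) := by
      intro J hJ
      obtain ⟨hJC, hne⟩ := Finset.mem_filter.1 hJ
      exact mem_Dset.2 ⟨J, Finset.mem_powerset.1 hJC, hne, rfl⟩
    rw [← Finset.sum_fiberwise_of_maps_to hmaps (fun J : Finset ℕ => (-1:ℚ)^J.card / ((J.gcd id : ℕ) : ℚ))]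
    apply Finset.sum_congr rfl
    intro d hd
    have hcon : ∀ J ∈ ((CfinD S xi).powerset.filter (fun J => J.Nonempty)).filter
        (fun J => J.gcd id = d), (-1:ℚ)^J.card/((J.gcd id : ℕ):ℚ) = (-1:ℚ)^J.card/(d:ℚ) := by
      intro J hJ
      rw [(Finset.mem_filter.1 hJ).2]
    rw [Finset.sum_congr rfl hcon, ← Finset.sum_div]
    congr 1
    rw [wD, ← Finset.filter_filter]
    push_cast
    rfl

theorem final (S : Finset ℕ) (h0 : 0 ∉ S)
    (hg : ∀ a ∈ S, ∀ b ∈ S, Nat.gcd a b ∈ S)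
    (xi : ℕ) (hxi : xi ∈ S) (hdc : genDCdvd S xi)
    (mu : ℕ → ℕ → ℤ)
    (hmu1 : ∀ a, mu a a = 1)
    (hmu2 : ∀ b ∈ S, ∀ a ∈ S, b ∣ a → b ≠ a →
      mu b a = -∑ c ∈ S.filter (fun c => b ∣ c ∧ c ≠ b ∧ c ∣ a), mu c a)
    (hmu0 : ∀ b a : ℕ, ¬b ∣ a → mu b a = 0)
    (Ψ : ℕ → ℚ)
    (hΨ : ∀ a, Ψ a = ∑ b ∈ S.filter (fun b => b ∣ a), (mu b a : ℚ) / (b : ℚ)) :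
    Ψ xi ≠ 0 ∧
    ((CSdvd S xi).ncard ≠ 1 → 0 < Ψ xi) ∧
    ((CSdvd S xi).ncard = 1 → Ψ xi < 0) := by
  classical
  have hSpos : ∀ w ∈ S, 0 < w := by
    intro w hw
    rcases Nat.eq_zero_or_pos w with h | h
    · exact absurd (h ▸ hw) h0
    · exact h
  have hxipos : 0 < xi := hSpos xi hxi
  have hCset : CSdvd S xi = ↑(CfinD S xi) := by
    ext y
    simp only [CSdvd, Set.mem_setOf_eq, Finset.mem_coe, mem_CfinD]
    constructor
    · rintro ⟨h1, _, h3, h4, h5⟩; exact ⟨h1, h3, h4, h5⟩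
    · rintro ⟨h1, h3, h4, h5⟩; exact ⟨h1, hxi, h3, h4, h5⟩
  set C := CfinD S xi with hC
  have hpos : ∀ c ∈ C, 0 < c := fun c hc => hSpos c (CfinD_subset hc)
  have hanti : ∀ c₁ ∈ C, ∀ c₂ ∈ C, c₁ ∣ c₂ → c₁ = c₂ := by
    intro c₁ h₁ c₂ h₂ hdvd
    obtain ⟨h1S, h1d, h1ne, h1cov⟩ := mem_CfinD.1 h₁
    obtain ⟨h2S, h2d, h2ne, _⟩ := mem_CfinD.1 h₂
    rcases h1cov c₂ h2S hdvd h2d with h | h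
    · exact h.symm
    · exact absurd h h2ne
  have hncard : (CSdvd S xi).ncard = C.card := by
    rw [hCset, Set.ncard_coe_finset]
  have hgcdcl : gcdcl (CSdvd S xi) = ↑(Dset C) := by
    ext d
    simp only [gcdcl, Set.mem_setOf_eq, Finset.mem_coe, mem_Dset, hCset]
    constructor
    · rintro ⟨F, hne, hsub, rfl⟩
      exact ⟨F, Finset.coe_subset.1 hsub, hne, rfl⟩
    · rintro ⟨F, hsub, hne, rfl⟩
      exact ⟨F, hne, Finset.coe_subset.2 hsub, rfl⟩
  obtain ⟨A, B, _, hA, hB, hABeq⟩ := hdc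
  have hE : ↑(Dset C \ C) = A ∪ B := by
    rw [Finset.coe_sdiff, ← hCset, ← hgcdcl, hABeq]
  have hPsi := Psi_formula h0 hg hxi mu hmu1 hmu2 Ψ hΨ
  rcases Nat.lt_or_ge C.card 2 with hlt | hge
  · rcases (by omega : C.card = 0 ∨ C.card = 1) with h01 | h01
    · -- no covers
      have hCempty : C = ∅ := Finset.card_eq_zero.1 h01
      have hDempty : Dset C = ∅ := by
        rw [Finset.eq_empty_iff_forall_notMem]
        intro d hd
        obtain ⟨F, hFC, hne, _⟩ := mem_Dset.1 hd
        rw [hCempty] at hFC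
        exact hne.ne_empty (Finset.subset_empty.1 hFC)
      have hval : Ψ xi = 1/(xi:ℚ) := by
        rw [hPsi, hDempty]
        simp
      have hp : 0 < Ψ xi := by rw [hval]; positivity
      exact ⟨hp.ne', fun _ => hp, fun h1 => absurd (hncard ▸ h1) (by rw [hCempty]; simp)⟩
    · -- exactly one cover
      obtain ⟨c, hc⟩ := Finset.card_eq_one.1 h01
      have hcC : c ∈ C := by rw [hc]; simp
      obtain ⟨hcS, hcd, hcne, _⟩ := mem_CfinD.1 hcC
      have hcpos : 0 < c := hpos c hcC
      have hD1 : Dset C = {c} := by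
        ext d
        simp only [Finset.mem_singleton]
        constructor
        · intro hd
          obtain ⟨F, hFC, hne, hgcd⟩ := mem_Dset.1 hd
          rw [hc] at hFC
          rcases Finset.subset_singleton_iff.1 hFC with rfl | rfl
          · exact absurd rfl hne.ne_empty
          · simpa using hgcd.symm
        · rintro rfl
          exact C_subset_Dset hcC
      have hval : Ψ xi = 1/(xi:ℚ) - 1/(c:ℚ) := by
        rw [hPsi, hD1, Finset.sum_singleton, wD_cover hanti hcC]
        push_cast
        ring
      have hclt : (c:ℚ) < (xi:ℚ) := by
        have h1 : c ≤ xi := Nat.le_of_dvd hxipos hcd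
        exact_mod_cast (by omega : c < xi)
      have hneg : Ψ xi < 0 := by
        rw [hval]
        have := one_div_lt_one_div_of_lt (by exact_mod_cast hcpos : (0:ℚ) < c) hclt
        linarith
      refine ⟨hneg.ne, fun h1 => absurd hncard ?_, fun _ => hneg⟩
      rw [hc]
      simp only [Finset.card_singleton]
      exact fun h => h1 h
  · -- at least two covers
    have hcharge := charge hpos hanti hA hB hE hge
    have hsd := Finset.sum_sdiff (f := fun d => (wD C d : ℚ)/(d:ℚ)) (C_subset_Dset (C := C))
    have hCsum : ∑ c ∈ C, (wD C c : ℚ)/(c:ℚ) = -∑ c ∈ C, (1:ℚ)/(c:ℚ) := by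
      rw [← Finset.sum_neg_distrib]
      apply Finset.sum_congr rfl
      intro c hc
      rw [wD_cover hanti hc]
      push_cast
      ring
    have hval : Ψ xi = 1/(xi:ℚ) + ∑ e ∈ Dset C \ C, (wD C e : ℚ)/(e:ℚ)
        - ∑ c ∈ C, (1:ℚ)/(c:ℚ) := by
      rw [hPsi, ← hC, ← hsd, hCsum]
      ring
    have hp : 0 < Ψ xi := by
      rw [hval]
      have h1 : (0:ℚ) < 1/(xi:ℚ) := by positivity
      linarith
    refine ⟨hp.ne', fun _ => hp, fun h1 => ?_⟩
    exfalso
    rw [hncard] at h1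
    omega

end Stmt8Aux

theorem stmt8 (S : Finset ℕ) (h0 : 0 ∉ S)
    (hg : ∀ a ∈ S, ∀ b ∈ S, Nat.gcd a b ∈ S)
    (xi : ℕ) (hxi : xi ∈ S) (hdc : genDCdvd S xi)
    -- `mu` is the Möbius function of the poset `(S, ∣)`
    (mu : ℕ → ℕ → ℤ)
    (hmu1 : ∀ a, mu a a = 1)
    (hmu2 : ∀ b ∈ S, ∀ a ∈ S, b ∣ a → b ≠ a →
      mu b a = -∑ c ∈ S.filter (fun c => b ∣ c ∧ c ≠ b ∧ c ∣ a), mu c a)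
    (hmu0 : ∀ b a : ℕ, ¬b ∣ a → mu b a = 0)
    (Ψ : ℕ → ℚ)
    (hΨ : ∀ a, Ψ a = ∑ b ∈ S.filter (fun b => b ∣ a), (mu b a : ℚ) / (b : ℚ)) :
    Ψ xi ≠ 0 ∧
    ((CSdvd S xi).ncard ≠ 1 → 0 < Ψ xi) ∧
    ((CSdvd S xi).ncard = 1 → Ψ xi < 0) := by
  exact Stmt8Aux.final S h0 hg xi hxi hdc mu hmu1 hmu2 hmu0 Ψ hΨ
end

section
/- If S is a finite GCD-closed set of positive integers in which every element generates a double-chain set, then the LCM matrix [S] = (lcm(x_i, x_j)) is invertible. -/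
open scoped Classical

open Finset

namespace Stmt9Aux

/-- gcd of `J ∪ {x}`. -/
noncomputable def gJ (x : ℕ) (J : Finset ℕ) : ℕ := (insert x J).gcd id

/-- The alternating sum `Σ_{J ⊆ C} (-1)^|J| / gcd(J ∪ {x})`. -/
noncomputable def Psum (x : ℕ) (C : Finset ℕ) : ℚ :=
  ∑ J ∈ C.powerset, (-1 : ℚ) ^ J.card / (gJ x J : ℚ)

/-- The gcd-closure of `C` (gcds of nonempty subsets), as a `Finset`. -/
noncomputable def GF (C : Finset ℕ) : Finset ℕ :=
  (C.powerset.erase ∅).image fun J => J.gcd id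

/-- The "middle" part: gcd-closure minus `C`. -/
noncomputable def MF (C : Finset ℕ) : Finset ℕ := GF C \ C

/-- Fiber-wise alternating count. -/
noncomputable def nu (x : ℕ) (C : Finset ℕ) (m : ℕ) : ℤ :=
  ∑ J ∈ C.powerset.filter (fun J => gJ x J = m), (-1) ^ J.card

section Core

variable {x : ℕ} {C : Finset ℕ}
variable (hx : 0 < x) (hdvd : ∀ y ∈ C, y ∣ x) (hne : ∀ y ∈ C, y ≠ x)
  (hanti : ∀ y ∈ C, ∀ y' ∈ C, y ∣ y' → y = y')

theorem GF_dvd_coatom {w : ℕ} (hw : w ∈ GF C) : ∃ y ∈ C, w ∣ y := by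
  simp only [GF, mem_image, mem_erase, mem_powerset] at hw
  obtain ⟨J, ⟨hJne, hJC⟩, rfl⟩ := hw
  obtain ⟨y, hy⟩ := Finset.nonempty_iff_ne_empty.2 hJne
  exact ⟨y, hJC hy, Finset.gcd_dvd hy⟩

include hdvd in
theorem GF_dvd_x {w : ℕ} (hw : w ∈ GF C) : w ∣ x := by
  obtain ⟨y, hy, hwy⟩ := GF_dvd_coatom hw
  exact hwy.trans (hdvd y hy)

include hx hdvd in
theorem GF_pos {w : ℕ} (hw : w ∈ GF C) : 0 < w :=
  Nat.pos_of_dvd_of_pos (GF_dvd_x hdvd hw) hx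

theorem C_subset_GF : C ⊆ GF C := by
  intro y hy
  simp only [GF, mem_image, mem_erase, mem_powerset]
  exact ⟨{y}, ⟨by simp, by simpa using hy⟩, by simp⟩

include hdvd hne in
theorem x_notMem_GF : x ∉ GF C := by
  intro hw
  obtain ⟨y, hy, hxy⟩ := GF_dvd_coatom hw
  exact hne y hy (Nat.dvd_antisymm (hdvd y hy) hxy)

theorem gJ_empty : gJ x ∅ = x := by simp [gJ]

include hdvd in
theorem gJ_of_nonempty {J : Finset ℕ} (hJC : J ⊆ C) (hJ : J.Nonempty) :
    gJ x J = J.gcd id := by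
  have h1 : J.gcd id ∣ x := by
    obtain ⟨y, hy⟩ := hJ
    exact (Finset.gcd_dvd hy).trans (hdvd y (hJC hy))
  rw [gJ, Finset.gcd_insert]
  exact Nat.gcd_eq_right h1

include hdvd in
theorem gJ_mem {J : Finset ℕ} (hJC : J ⊆ C) : gJ x J ∈ insert x (GF C) := by
  rcases J.eq_empty_or_nonempty with rfl | hJ
  · simp [gJ_empty]
  · rw [gJ_of_nonempty hdvd hJC hJ]
    refine mem_insert_of_mem ?_
    simp only [GF, mem_image, mem_erase, mem_powerset]
    exact ⟨J, ⟨Finset.nonempty_iff_ne_empty.1 hJ, hJC⟩, rfl⟩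

include hdvd in
theorem dvd_gJ_iff {J : Finset ℕ} (hJC : J ⊆ C) {z : ℕ} (hzx : z ∣ x) :
    z ∣ gJ x J ↔ ∀ y ∈ J, z ∣ y := by
  rw [gJ, Finset.dvd_gcd_iff]
  constructor
  · intro h y hy; simpa using h y (mem_insert_of_mem hy)
  · intro h b hb
    rcases mem_insert.1 hb with rfl | hb
    · simpa using hzx
    · simpa using h b hb

include hdvd in
theorem Psum_eq :
    Psum x C = ∑ w ∈ insert x (GF C), (nu x C w : ℚ) / (w : ℚ) := by
  have hmap : ∀ J ∈ C.powerset, gJ x J ∈ insert x (GF C) := fun J hJ =>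
    gJ_mem hdvd (mem_powerset.1 hJ)
  rw [Psum, ← Finset.sum_fiberwise_of_maps_to hmap
    (fun J => (-1 : ℚ) ^ J.card / (gJ x J : ℚ))]
  refine Finset.sum_congr rfl fun w _ => ?_
  rw [nu, Int.cast_sum, Finset.sum_div]
  refine Finset.sum_congr rfl fun J hJ => ?_
  rw [(mem_filter.1 hJ).2]
  push_cast
  ring

include hdvd in
theorem sum_nu_multiples {z : ℕ} (hz : z ∈ GF C) :
    ∑ w ∈ (insert x (GF C)).filter (z ∣ ·), nu x C w = 0 := by
  have hzx : z ∣ x := GF_dvd_x hdvd hz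
  -- rewrite as a single sum over a powerset
  have key : ∑ w ∈ (insert x (GF C)).filter (z ∣ ·), nu x C w
      = ∑ J ∈ C.powerset.filter (fun J => z ∣ gJ x J), (-1 : ℤ) ^ J.card := by
    have hmap : ∀ J ∈ C.powerset.filter (fun J => z ∣ gJ x J),
        gJ x J ∈ (insert x (GF C)).filter (z ∣ ·) := by
      intro J hJ
      rcases mem_filter.1 hJ with ⟨hJp, hJz⟩
      exact mem_filter.2 ⟨gJ_mem hdvd (mem_powerset.1 hJp), hJz⟩
    rw [← Finset.sum_fiberwise_of_maps_to hmap (fun J => (-1 : ℤ) ^ J.card)]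
    refine Finset.sum_congr rfl fun w hw => ?_
    rw [nu]
    refine Finset.sum_congr ?_ fun _ _ => rfl
    ext J
    simp only [mem_filter, mem_powerset]
    constructor
    · rintro ⟨hJp, h2⟩
      exact ⟨⟨hJp, h2 ▸ (mem_filter.1 hw).2⟩, h2⟩
    · rintro ⟨⟨hJp, _⟩, h2⟩; exact ⟨hJp, h2⟩
  rw [key]
  have hCz : (C.filter (z ∣ ·)).Nonempty := by
    obtain ⟨y, hy, hzy⟩ := GF_dvd_coatom hz
    exact ⟨y, mem_filter.2 ⟨hy, hzy⟩⟩
  have hps : C.powerset.filter (fun J => z ∣ gJ x J) = (C.filter (z ∣ ·)).powerset := by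
    ext J
    simp only [mem_filter, mem_powerset]
    constructor
    · rintro ⟨hJC, hdg⟩
      intro y hy
      exact mem_filter.2 ⟨hJC hy, (dvd_gJ_iff hdvd hJC hzx).1 hdg y hy⟩
    · intro h
      have hJC : J ⊆ C := fun y hy => (mem_filter.1 (h hy)).1
      exact ⟨hJC, (dvd_gJ_iff hdvd hJC hzx).2 fun y hy => (mem_filter.1 (h hy)).2⟩
  rw [hps]
  exact Finset.sum_powerset_neg_one_pow_card_of_nonempty hCz

include hdvd hne in
theorem nu_x : nu x C x = 1 := by
  have : C.powerset.filter (fun J => gJ x J = x) = {∅} := by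
    ext J
    simp only [mem_filter, mem_powerset, mem_singleton]
    constructor
    · rintro ⟨hJC, hg⟩
      by_contra hJne
      obtain ⟨y, hy⟩ := Finset.nonempty_iff_ne_empty.2 hJne
      have h1 : gJ x J ∣ y := by
        rw [gJ_of_nonempty hdvd hJC ⟨y, hy⟩]
        exact Finset.gcd_dvd hy
      rw [hg] at h1
      exact hne y (hJC hy) (Nat.dvd_antisymm (hdvd y (hJC hy)) h1)
    · rintro rfl
      exact ⟨Finset.empty_subset _, gJ_empty⟩
  rw [nu, this]
  simp

include hdvd hne hanti in
theorem nu_coatom {y : ℕ} (hy : y ∈ C) : nu x C y = -1 := by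
  have hyG : y ∈ GF C := C_subset_GF hy
  have hfil : (insert x (GF C)).filter (y ∣ ·) = {y, x} := by
    ext w
    simp only [mem_filter, mem_insert, mem_singleton]
    constructor
    · rintro ⟨hw, hyw⟩
      rcases hw with rfl | hw
      · right; rfl
      · left
        obtain ⟨y', hy', hwy'⟩ := GF_dvd_coatom hw
        have := hanti y hy y' hy' (hyw.trans hwy')
        subst this
        exact Nat.dvd_antisymm hwy' hyw
    · rintro (rfl | rfl)
      · exact ⟨Or.inr hyG, dvd_rfl⟩
      · exact ⟨Or.inl rfl, hdvd y hy⟩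
  have h0 := sum_nu_multiples hdvd hyG
  rw [hfil] at h0
  have hyx : y ≠ x := hne y hy
  rw [Finset.sum_pair hyx] at h0
  rw [nu_x hdvd hne] at h0
  omega

include hdvd hne hanti in
theorem TT_eq {z : ℕ} (hz : z ∈ MF C) :
    ∑ w ∈ (MF C).filter (z ∣ ·), nu x C w = ((C.filter (z ∣ ·)).card : ℤ) - 1 := by
  have hzG : z ∈ GF C := (Finset.sdiff_subset) hz
  have hzx : z ∣ x := GF_dvd_x hdvd hzG
  have h0 := sum_nu_multiples hdvd hzG
  have hGF : MF C ∪ C = GF C := Finset.sdiff_union_of_subset C_subset_GF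
  rw [Finset.filter_insert, if_pos hzx, Finset.sum_insert (by
      intro hmem
      exact x_notMem_GF hdvd hne (Finset.mem_of_mem_filter x hmem)),
    ← hGF, Finset.filter_union] at h0
  have hdis : Disjoint ((MF C).filter (z ∣ ·)) (C.filter (z ∣ ·)) :=
    Finset.disjoint_filter_filter (show Disjoint (GF C \ C) C from Finset.sdiff_disjoint)
  rw [Finset.sum_union hdis] at h0
  have hCsum : ∑ w ∈ C.filter (z ∣ ·), nu x C w = -((C.filter (z ∣ ·)).card : ℤ) := by
    rw [Finset.sum_congr rfl (fun w hw => nu_coatom hdvd hne hanti (Finset.mem_of_mem_filter w hw)),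
      Finset.sum_const]
    simp
  rw [nu_x hdvd hne, hCsum] at h0
  omega

include hanti in
theorem coatom_dvd_MF {y m : ℕ} (hy : y ∈ C) (hm : m ∈ MF C) (hym : y ∣ m) : False := by
  rcases Finset.mem_sdiff.1 hm with ⟨hmG, hmC⟩
  obtain ⟨y', hy', hmy'⟩ := GF_dvd_coatom hmG
  have := hanti y hy y' hy' (hym.trans hmy')
  subst this
  exact hmC (by rwa [Nat.dvd_antisymm hmy' hym])

theorem gcd_mem_GF {u v : ℕ} (hu : u ∈ GF C) (hv : v ∈ GF C) : Nat.gcd u v ∈ GF C := by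
  simp only [GF, mem_image, mem_erase, mem_powerset] at hu hv ⊢
  obtain ⟨J1, ⟨hJ1ne, hJ1C⟩, rfl⟩ := hu
  obtain ⟨J2, ⟨hJ2ne, hJ2C⟩, rfl⟩ := hv
  refine ⟨J1 ∪ J2, ⟨?_, Finset.union_subset hJ1C hJ2C⟩, ?_⟩
  · intro h
    exact hJ1ne (Finset.union_eq_empty.1 h).1
  · rw [Finset.gcd_union]; rfl

include hanti in
theorem MF_gcd_closed {u v : ℕ} (hu : u ∈ MF C) (hv : v ∈ MF C) : Nat.gcd u v ∈ MF C := by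
  have hG : Nat.gcd u v ∈ GF C :=
    gcd_mem_GF (Finset.sdiff_subset hu) (Finset.sdiff_subset hv)
  refine Finset.mem_sdiff.2 ⟨hG, fun hC => ?_⟩
  exact coatom_dvd_MF hanti hC hu (Nat.gcd_dvd_left u v)

include hanti in
theorem gcd_coatom_MF {y m : ℕ} (hy : y ∈ C) (hm : m ∈ MF C) : Nat.gcd y m ∈ MF C := by
  have hG : Nat.gcd y m ∈ GF C := gcd_mem_GF (C_subset_GF hy) (Finset.sdiff_subset hm)
  refine Finset.mem_sdiff.2 ⟨hG, fun hC => ?_⟩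
  exact coatom_dvd_MF hanti hC hm (Nat.gcd_dvd_right y m)

include hanti in
theorem gcd_two_coatoms {y y' : ℕ} (hy : y ∈ C) (hy' : y' ∈ C) (hne' : y ≠ y') :
    Nat.gcd y y' ∈ MF C := by
  have hG : Nat.gcd y y' ∈ GF C := gcd_mem_GF (C_subset_GF hy) (C_subset_GF hy')
  refine Finset.mem_sdiff.2 ⟨hG, fun hC => ?_⟩
  have h1 := hanti _ hC y hy (Nat.gcd_dvd_left y y')
  have h2 := hanti _ hC y' hy' (Nat.gcd_dvd_right y y')
  exact hne' (h1 ▸ h2)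

include hx hdvd in
theorem exists_min_of_gcd_closed {E : Finset ℕ} (hE : E ⊆ MF C) (hEne : E.Nonempty)
    (hcl : ∀ u ∈ E, ∀ v ∈ E, Nat.gcd u v ∈ E) : ∃ e ∈ E, ∀ w ∈ E, e ∣ w := by
  refine ⟨E.min' hEne, E.min'_mem hEne, fun w hw => ?_⟩
  set e := E.min' hEne with he
  have hgE : Nat.gcd e w ∈ E := hcl e (E.min'_mem hEne) w hw
  have h1 : Nat.gcd e w ≤ e := Nat.le_of_dvd
    (GF_pos hx hdvd (Finset.sdiff_subset (hE (E.min'_mem hEne)))) (Nat.gcd_dvd_left e w)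
  have h2 : e ≤ Nat.gcd e w := E.min'_le _ hgE
  have : Nat.gcd e w = e := le_antisymm h1 h2
  rw [← this]
  exact Nat.gcd_dvd_right e w

include hx hdvd hne hanti in
theorem sum_nu_diff {z z' : ℕ} (hz : z ∈ MF C) (_hz' : z' ∈ MF C) :
    ∑ w ∈ (MF C).filter (fun w => z ∣ w ∧ ¬ z' ∣ w), nu x C w
      ≤ ((C.filter (fun y => z ∣ y ∧ ¬ z' ∣ y)).card : ℤ) := by
  classical
  set D := (MF C).filter (fun w => z ∣ w ∧ ¬ z' ∣ w) with hD
  set E := (MF C).filter (fun w => z ∣ w ∧ z' ∣ w) with hE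
  have hsplit : (MF C).filter (z ∣ ·) = D ∪ E := by
    ext w; simp only [hD, hE, mem_filter, mem_union]; tauto
  have hdis : Disjoint D E := by
    rw [hD, hE, Finset.disjoint_filter]; tauto
  have hsum : ∑ w ∈ D, nu x C w + ∑ w ∈ E, nu x C w = ((C.filter (z ∣ ·)).card : ℤ) - 1 := by
    rw [← Finset.sum_union hdis, ← hsplit, TT_eq hdvd hne hanti hz]
  have hcsplit : C.filter (z ∣ ·)
      = C.filter (fun y => z ∣ y ∧ ¬ z' ∣ y) ∪ C.filter (fun y => z ∣ y ∧ z' ∣ y) := by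
    ext y; simp only [mem_filter, mem_union]; tauto
  have hcdis : Disjoint (C.filter (fun y => z ∣ y ∧ ¬ z' ∣ y))
      (C.filter (fun y => z ∣ y ∧ z' ∣ y)) := by
    rw [Finset.disjoint_filter]; tauto
  have hccard : (C.filter (z ∣ ·)).card
      = (C.filter (fun y => z ∣ y ∧ ¬ z' ∣ y)).card + (C.filter (fun y => z ∣ y ∧ z' ∣ y)).card := by
    rw [hcsplit, Finset.card_union_of_disjoint hcdis]
  rcases E.eq_empty_or_nonempty with hEe | hEne
  · -- no middle element above both z, z'
    have hcard1 : (C.filter (fun y => z ∣ y ∧ z' ∣ y)).card ≤ 1 := by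
      rw [Finset.card_le_one]
      intro a ha b hb
      by_contra hab
      rcases mem_filter.1 ha with ⟨haC, hza, hz'a⟩
      rcases mem_filter.1 hb with ⟨hbC, hzb, hz'b⟩
      have hgm : Nat.gcd a b ∈ MF C := gcd_two_coatoms hanti haC hbC hab
      have : Nat.gcd a b ∈ E := by
        rw [hE, mem_filter]
        exact ⟨hgm, Nat.dvd_gcd hza hzb, Nat.dvd_gcd hz'a hz'b⟩
      rw [hEe] at this
      exact absurd this (Finset.notMem_empty _)
    rw [hEe, Finset.sum_empty] at hsum
    omega
  · -- E has a minimum e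
    have hEcl : ∀ u ∈ E, ∀ v ∈ E, Nat.gcd u v ∈ E := by
      intro u hu v hv
      rcases mem_filter.1 hu with ⟨huM, hzu, hz'u⟩
      rcases mem_filter.1 hv with ⟨hvM, hzv, hz'v⟩
      exact mem_filter.2 ⟨MF_gcd_closed hanti huM hvM,
        Nat.dvd_gcd hzu hzv, Nat.dvd_gcd hz'u hz'v⟩
    obtain ⟨e, heE, hemin⟩ := exists_min_of_gcd_closed hx hdvd (Finset.filter_subset _ _) hEne hEcl
    rcases mem_filter.1 heE with ⟨heM, hze, hz'e⟩
    have hEeq : E = (MF C).filter (e ∣ ·) := by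
      ext w
      simp only [hE, mem_filter]
      constructor
      · intro hw
        exact ⟨hw.1, hemin w (mem_filter.2 hw)⟩
      · rintro ⟨hwM, hew⟩
        exact ⟨hwM, hze.trans hew, hz'e.trans hew⟩
    have hEsum : ∑ w ∈ E, nu x C w = ((C.filter (e ∣ ·)).card : ℤ) - 1 := by
      rw [hEeq, TT_eq hdvd hne hanti heM]
    have hcard2 : (C.filter (fun y => z ∣ y ∧ z' ∣ y)).card ≤ (C.filter (e ∣ ·)).card := by
      refine Finset.card_le_card ?_
      intro y hy
      rcases mem_filter.1 hy with ⟨hyC, hzy, hz'y⟩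
      have hgm : Nat.gcd y e ∈ MF C := gcd_coatom_MF hanti hyC heM
      have hgE : Nat.gcd y e ∈ E := by
        rw [hE, mem_filter]
        exact ⟨hgm, Nat.dvd_gcd hzy hze, Nat.dvd_gcd hz'y hz'e⟩
      have hey : e ∣ y := (hemin _ hgE).trans (Nat.gcd_dvd_left y e)
      exact mem_filter.2 ⟨hyC, hey⟩
    omega

include hx hdvd hne hanti in
theorem sum_nu_pair {z₁ z₂ : ℕ} (hz₁ : z₁ ∈ MF C) (hz₂ : z₂ ∈ MF C) :
    ∑ w ∈ (MF C).filter (fun w => z₁ ∣ w ∨ z₂ ∣ w), nu x C w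
      ≤ ((C.filter (fun y => z₁ ∣ y ∨ z₂ ∣ y)).card : ℤ) - 1 := by
  classical
  have hsplit : (MF C).filter (fun w => z₁ ∣ w ∨ z₂ ∣ w)
      = (MF C).filter (z₁ ∣ ·) ∪ (MF C).filter (fun w => z₂ ∣ w ∧ ¬ z₁ ∣ w) := by
    ext w; simp only [mem_filter, mem_union]; tauto
  have hdis : Disjoint ((MF C).filter (z₁ ∣ ·)) ((MF C).filter (fun w => z₂ ∣ w ∧ ¬ z₁ ∣ w)) := by
    rw [Finset.disjoint_filter]; tauto
  rw [hsplit, Finset.sum_union hdis]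
  have h1 := TT_eq hdvd hne hanti hz₁
  have h2 := sum_nu_diff hx hdvd hne hanti hz₂ hz₁
  have hcsplit : C.filter (fun y => z₁ ∣ y ∨ z₂ ∣ y)
      = C.filter (z₁ ∣ ·) ∪ C.filter (fun y => z₂ ∣ y ∧ ¬ z₁ ∣ y) := by
    ext y; simp only [mem_filter, mem_union]; tauto
  have hcdis : Disjoint (C.filter (z₁ ∣ ·)) (C.filter (fun y => z₂ ∣ y ∧ ¬ z₁ ∣ y)) := by
    rw [Finset.disjoint_filter]; tauto
  have hccard : (C.filter (fun y => z₁ ∣ y ∨ z₂ ∣ y)).card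
      = (C.filter (z₁ ∣ ·)).card + (C.filter (fun y => z₂ ∣ y ∧ ¬ z₁ ∣ y)).card := by
    rw [hcsplit, Finset.card_union_of_disjoint hcdis]
  rw [hccard]
  push_cast
  omega

include hx hdvd in
theorem upclosed_two_gen
    (htc : ∃ A B : Set ℕ, IsChain (· ∣ ·) A ∧ IsChain (· ∣ ·) B ∧ ↑(MF C) = A ∪ B)
    {W : Finset ℕ} (hW : W ⊆ MF C) (hWne : W.Nonempty)
    (hup : ∀ w ∈ W, ∀ w' ∈ MF C, w ∣ w' → w' ∈ W) :
    ∃ z₁ ∈ W, ∃ z₂ ∈ W, W = (MF C).filter (fun w => z₁ ∣ w ∨ z₂ ∣ w) := by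
  classical
  obtain ⟨A, B, hA, hB, hAB⟩ := htc
  have hpos : ∀ w ∈ W, 0 < w := fun w hw =>
    GF_pos hx hdvd (Finset.sdiff_subset (hW hw))
  have key : ∀ V : Finset ℕ, V ⊆ W → V.Nonempty →
      (∀ u ∈ V, ∀ v ∈ V, u ∣ v ∨ v ∣ u) → ∃ z ∈ V, ∀ w ∈ V, z ∣ w := by
    intro V hVW hV htot
    refine ⟨V.min' hV, V.min'_mem hV, fun w hw => ?_⟩
    rcases htot _ (V.min'_mem hV) _ hw with h | h
    · exact h
    · have h1 : w ≤ V.min' hV := Nat.le_of_dvd (hpos _ (hVW (V.min'_mem hV))) h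
      have h2 := V.min'_le _ hw
      have : w = V.min' hV := le_antisymm h1 h2
      rw [this]
  set WA := W.filter (· ∈ A) with hWA
  set WB := W.filter (· ∉ A) with hWB
  have hWun : WA ∪ WB = W := Finset.filter_union_filter_not_eq _ W
  have htotA : ∀ u ∈ WA, ∀ v ∈ WA, u ∣ v ∨ v ∣ u := by
    intro u hu v hv
    rcases eq_or_ne u v with rfl | huv
    · exact Or.inl dvd_rfl
    · exact hA (mem_filter.1 hu).2 (mem_filter.1 hv).2 huv
  have htotB : ∀ u ∈ WB, ∀ v ∈ WB, u ∣ v ∨ v ∣ u := by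
    intro u hu v hv
    have huB : u ∈ B := by
      have : u ∈ (A ∪ B : Set ℕ) := hAB ▸ (Finset.mem_coe.2 (hW (Finset.mem_of_mem_filter u hu)))
      rcases this with h | h
      · exact absurd h (mem_filter.1 hu).2
      · exact h
    have hvB : v ∈ B := by
      have : v ∈ (A ∪ B : Set ℕ) := hAB ▸ (Finset.mem_coe.2 (hW (Finset.mem_of_mem_filter v hv)))
      rcases this with h | h
      · exact absurd h (mem_filter.1 hv).2
      · exact h
    rcases eq_or_ne u v with rfl | huv
    · exact Or.inl dvd_rfl
    · exact hB huB hvB huv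
  have hfin : ∀ z₁ ∈ W, ∀ z₂ ∈ W, (∀ w ∈ W, z₁ ∣ w ∨ z₂ ∣ w) →
      W = (MF C).filter (fun w => z₁ ∣ w ∨ z₂ ∣ w) := by
    intro z₁ hz₁ z₂ hz₂ hcov
    ext w
    simp only [mem_filter]
    constructor
    · intro hw; exact ⟨hW hw, hcov w hw⟩
    · rintro ⟨hwM, h | h⟩
      · exact hup z₁ hz₁ w hwM h
      · exact hup z₂ hz₂ w hwM h
  rcases WA.eq_empty_or_nonempty with hAe | hAne
  · have hBne : WB.Nonempty := by
      rcases hWne with ⟨w, hw⟩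
      rw [← hWun, hAe, Finset.empty_union] at hw
      exact ⟨w, hw⟩
    obtain ⟨z, hzB, hzmin⟩ := key WB (Finset.filter_subset _ _) hBne htotB
    have hzW : z ∈ W := Finset.mem_of_mem_filter z hzB
    refine ⟨z, hzW, z, hzW, hfin z hzW z hzW fun w hw => ?_⟩
    have : w ∈ WB := by rw [← hWun, hAe, Finset.empty_union] at hw; exact hw
    exact Or.inl (hzmin w this)
  · obtain ⟨z₁, hz₁A, hz₁min⟩ := key WA (Finset.filter_subset _ _) hAne htotA
    have hz₁W : z₁ ∈ W := Finset.mem_of_mem_filter z₁ hz₁A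
    rcases WB.eq_empty_or_nonempty with hBe | hBne
    · refine ⟨z₁, hz₁W, z₁, hz₁W, hfin z₁ hz₁W z₁ hz₁W fun w hw => ?_⟩
      have : w ∈ WA := by rw [← hWun, hBe, Finset.union_empty] at hw; exact hw
      exact Or.inl (hz₁min w this)
    · obtain ⟨z₂, hz₂B, hz₂min⟩ := key WB (Finset.filter_subset _ _) hBne htotB
      have hz₂W : z₂ ∈ W := Finset.mem_of_mem_filter z₂ hz₂B
      refine ⟨z₁, hz₁W, z₂, hz₂W, hfin z₁ hz₁W z₂ hz₂W fun w hw => ?_⟩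
      rw [← hWun] at hw
      rcases Finset.mem_union.1 hw with h | h
      · exact Or.inl (hz₁min w h)
      · exact Or.inr (hz₂min w h)

include hx hdvd hne hanti in
theorem nu_nonneg
    (htc : ∃ A B : Set ℕ, IsChain (· ∣ ·) A ∧ IsChain (· ∣ ·) B ∧ ↑(MF C) = A ∪ B)
    {m : ℕ} (hm : m ∈ MF C) : 0 ≤ nu x C m := by
  classical
  set W := (MF C).filter (fun w => m ∣ w ∧ w ≠ m) with hWdef
  have hsplit : (MF C).filter (m ∣ ·) = insert m W := by
    ext w
    simp only [hWdef, mem_filter, mem_insert]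
    constructor
    · rintro ⟨hwM, hmw⟩
      rcases eq_or_ne w m with rfl | hwm
      · exact Or.inl rfl
      · exact Or.inr ⟨hwM, hmw, hwm⟩
    · rintro (rfl | ⟨hwM, hmw, _⟩)
      · exact ⟨hm, dvd_rfl⟩
      · exact ⟨hwM, hmw⟩
  have hmnW : m ∉ W := by simp [hWdef]
  have hTT := TT_eq hdvd hne hanti hm
  rw [hsplit, Finset.sum_insert hmnW] at hTT
  have hccm : 1 ≤ (C.filter (m ∣ ·)).card := by
    obtain ⟨y, hy, hmy⟩ := GF_dvd_coatom (Finset.sdiff_subset hm)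
    exact Finset.card_pos.2 ⟨y, mem_filter.2 ⟨hy, hmy⟩⟩
  rcases W.eq_empty_or_nonempty with hWe | hWne
  · rw [hWe, Finset.sum_empty] at hTT
    omega
  · have hup : ∀ w ∈ W, ∀ w' ∈ MF C, w ∣ w' → w' ∈ W := by
      intro w hw w' hw'M hww'
      rcases mem_filter.1 hw with ⟨hwM, hmw, hwm⟩
      refine mem_filter.2 ⟨hw'M, hmw.trans hww', fun h => ?_⟩
      subst h
      exact hwm (Nat.dvd_antisymm hww' hmw)
    obtain ⟨z₁, hz₁W, z₂, hz₂W, hWeq⟩ :=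
      upclosed_two_gen hx hdvd htc (Finset.filter_subset _ _) hWne hup
    have hz₁M : z₁ ∈ MF C := Finset.mem_of_mem_filter _ hz₁W
    have hz₂M : z₂ ∈ MF C := Finset.mem_of_mem_filter _ hz₂W
    have hWsum : ∑ w ∈ W, nu x C w
        ≤ ((C.filter (fun y => z₁ ∣ y ∨ z₂ ∣ y)).card : ℤ) - 1 := by
      rw [hWdef, hWeq]
      exact sum_nu_pair hx hdvd hne hanti hz₁M hz₂M
    have hsub : (C.filter (fun y => z₁ ∣ y ∨ z₂ ∣ y)).card ≤ (C.filter (m ∣ ·)).card := by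
      refine Finset.card_le_card ?_
      intro y hy
      rcases mem_filter.1 hy with ⟨hyC, h | h⟩
      · exact mem_filter.2 ⟨hyC, ((mem_filter.1 hz₁W).2.1).trans h⟩
      · exact mem_filter.2 ⟨hyC, ((mem_filter.1 hz₂W).2.1).trans h⟩
    have : ((C.filter (fun y => z₁ ∣ y ∨ z₂ ∣ y)).card : ℤ) ≤ ((C.filter (m ∣ ·)).card : ℤ) := by
      exact_mod_cast hsub
    omega

include hanti in
theorem MF_nonempty (hcard : 2 ≤ C.card) : (MF C).Nonempty := by
  obtain ⟨y, hy, y', hy', hyy'⟩ := Finset.one_lt_card.1 hcard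
  exact ⟨Nat.gcd y y', gcd_two_coatoms hanti hy hy' hyy'⟩

include hx hdvd hne hanti in
theorem sum_nu_total (hcard : 2 ≤ C.card) :
    ∑ m ∈ MF C, nu x C m = (C.card : ℤ) - 1 := by
  classical
  have hMne : (MF C).Nonempty := MF_nonempty hanti hcard
  obtain ⟨g, hgM, hgmin⟩ := exists_min_of_gcd_closed hx hdvd (Finset.Subset.refl _) hMne
    (fun u hu v hv => MF_gcd_closed hanti hu hv)
  have hgall : ∀ y ∈ C, g ∣ y := by
    intro y hy
    obtain ⟨y', hy', hyy'⟩ := Finset.exists_mem_ne hcard y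
    have hgm : Nat.gcd y y' ∈ MF C := gcd_two_coatoms hanti hy hy' (Ne.symm hyy')
    exact (hgmin _ hgm).trans (Nat.gcd_dvd_left y y')
  have h1 : (MF C).filter (g ∣ ·) = MF C := by
    refine Finset.filter_true_of_mem fun m hm => hgmin m hm
  have h2 : C.filter (g ∣ ·) = C := Finset.filter_true_of_mem hgall
  have := TT_eq hdvd hne hanti hgM
  rw [h1, h2] at this
  exact this

include hx hdvd hne hanti in
theorem exists_sigma
    (htc : ∃ A B : Set ℕ, IsChain (· ∣ ·) A ∧ IsChain (· ∣ ·) B ∧ ↑(MF C) = A ∪ B)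
    (hcard : 2 ≤ C.card) :
    ∃ F : ℕ → ℕ, (∀ y ∈ C, F y ∈ MF C ∧ F y ∣ y) ∧
      ∀ m ∈ MF C, ((C.filter (fun y => F y = m)).card : ℤ) ≤ 2 * nu x C m := by
  classical
  set t : {y // y ∈ C} → Finset (ℕ × ℕ) := fun y =>
    ((MF C).filter (· ∣ y.1)).biUnion
      (fun m => (Finset.range (2 * (nu x C m).toNat)).image fun k => (m, k)) with ht
  have hhall : ∀ s : Finset {y // y ∈ C}, s.card ≤ (s.biUnion t).card := by
    intro s
    set N := (MF C).filter (fun m => ∃ y ∈ s, m ∣ y.1) with hN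
    have hbi : s.biUnion t
        = N.biUnion (fun m => (Finset.range (2 * (nu x C m).toNat)).image fun k => (m, k)) := by
      ext p
      simp only [ht, hN, Finset.mem_biUnion, Finset.mem_image, Finset.mem_filter,
        Finset.mem_range]
      constructor
      · rintro ⟨y, hy, m, ⟨hmM, hmy⟩, k, hk, rfl⟩
        exact ⟨m, ⟨hmM, y, hy, hmy⟩, k, hk, rfl⟩
      · rintro ⟨m, ⟨hmM, y, hy, hmy⟩, k, hk, rfl⟩
        exact ⟨y, hy, m, ⟨hmM, hmy⟩, k, hk, rfl⟩
    have hdisj : ∀ m₁ ∈ N, ∀ m₂ ∈ N, m₁ ≠ m₂ →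
        Disjoint ((Finset.range (2 * (nu x C m₁).toNat)).image fun k => (m₁, k))
          ((Finset.range (2 * (nu x C m₂).toNat)).image fun k => (m₂, k)) := by
      intro m₁ _ m₂ _ hne12
      rw [Finset.disjoint_left]
      rintro p hp1 hp2
      simp only [Finset.mem_image, Finset.mem_range] at hp1 hp2
      obtain ⟨k₁, _, rfl⟩ := hp1
      obtain ⟨k₂, _, hk⟩ := hp2
      exact hne12 (congrArg Prod.fst hk).symm
    have hcardbi : ((s.biUnion t).card : ℤ) = ∑ m ∈ N, 2 * nu x C m := by
      rw [hbi, Finset.card_biUnion hdisj]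
      push_cast
      refine Finset.sum_congr rfl fun m hm => ?_
      rw [Finset.card_image_of_injective _ (fun a b h => by injection h),
        Finset.card_range]
      have := nu_nonneg hx hdvd hne hanti htc (Finset.mem_of_mem_filter m hm)
      push_cast
      omega
    -- now the Hall inequality
    have hscard : (s.card : ℤ) ≤ ∑ m ∈ N, 2 * nu x C m := by
      have hsplit : ∑ m ∈ MF C, nu x C m
          = ∑ m ∈ N, nu x C m + ∑ m ∈ (MF C).filter (fun m => ¬ ∃ y ∈ s, m ∣ y.1), nu x C m := by
        rw [hN, Finset.sum_filter_add_sum_filter_not]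
      have htot := sum_nu_total hx hdvd hne hanti hcard
      have hsC : s.card ≤ C.card := by
        calc s.card ≤ Fintype.card {y // y ∈ C} := Finset.card_le_univ s
        _ = C.card := Fintype.card_coe C
      set Wc := (MF C).filter (fun m => ¬ ∃ y ∈ s, m ∣ y.1) with hWc
      have h2C : (2:ℤ) ≤ (C.card : ℤ) := by exact_mod_cast hcard
      have hs' : (s.card : ℤ) ≤ (C.card : ℤ) := by exact_mod_cast hsC
      rcases Wc.eq_empty_or_nonempty with hWce | hWcne
      · rw [hWce, Finset.sum_empty, add_zero] at hsplit
        rw [← Finset.mul_sum, ← hsplit, htot]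
        omega
      · have hup : ∀ w ∈ Wc, ∀ w' ∈ MF C, w ∣ w' → w' ∈ Wc := by
          intro w hw w' hw'M hww'
          rw [hWc, mem_filter] at hw ⊢
          rcases hw with ⟨hwM, hwn⟩
          refine ⟨hw'M, fun hex => hwn ?_⟩
          obtain ⟨y, hy, hdy⟩ := hex
          exact ⟨y, hy, hww'.trans hdy⟩
        have hWcsub : Wc ⊆ MF C := by rw [hWc]; exact Finset.filter_subset _ _
        obtain ⟨z₁, hz₁W, z₂, hz₂W, hWeq⟩ :=
          upclosed_two_gen hx hdvd htc hWcsub hWcne hup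
        have hz₁M : z₁ ∈ MF C := hWcsub hz₁W
        have hz₂M : z₂ ∈ MF C := hWcsub hz₂W
        have hWsum : ∑ w ∈ Wc, nu x C w
            ≤ ((C.filter (fun y => z₁ ∣ y ∨ z₂ ∣ y)).card : ℤ) - 1 := by
          rw [hWeq]
          exact sum_nu_pair hx hdvd hne hanti hz₁M hz₂M
        have havoid : (C.filter (fun y => z₁ ∣ y ∨ z₂ ∣ y)).card
            + (C.filter (fun y => ¬ (z₁ ∣ y ∨ z₂ ∣ y))).card = C.card :=
          Finset.card_filter_add_card_filter_not _
        have hsavoid : s.card ≤ (C.filter (fun y => ¬ (z₁ ∣ y ∨ z₂ ∣ y))).card := by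
          have himg : s.image Subtype.val ⊆ C.filter (fun y => ¬ (z₁ ∣ y ∨ z₂ ∣ y)) := by
            intro y hy
            obtain ⟨y', hy', rfl⟩ := Finset.mem_image.1 hy
            refine mem_filter.2 ⟨y'.2, fun hdvd' => ?_⟩
            have hzW : ∀ z, z ∈ Wc → z ∣ (y' : ℕ) → False := by
              intro z hzWc hzy
              rw [hWc, mem_filter] at hzWc
              exact hzWc.2 ⟨y', hy', hzy⟩
            rcases hdvd' with h | h
            · exact hzW z₁ hz₁W h
            · exact hzW z₂ hz₂W h
          calc s.card = (s.image Subtype.val).card :=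
                (Finset.card_image_of_injective s Subtype.val_injective).symm
            _ ≤ _ := Finset.card_le_card himg
        have hca : ((C.filter (fun y => z₁ ∣ y ∨ z₂ ∣ y)).card : ℤ)
            + ((C.filter (fun y => ¬ (z₁ ∣ y ∨ z₂ ∣ y))).card : ℤ) = (C.card : ℤ) := by
          exact_mod_cast havoid
        have hsa : (s.card : ℤ) ≤ ((C.filter (fun y => ¬ (z₁ ∣ y ∨ z₂ ∣ y))).card : ℤ) := by
          exact_mod_cast hsavoid
        rw [← Finset.mul_sum]
        omega
    omega
  obtain ⟨f, hfinj, hfmem⟩ := (Finset.all_card_le_biUnion_card_iff_exists_injective t).1 hhall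
  set F : ℕ → ℕ := fun y => if h : y ∈ C then (f ⟨y, h⟩).1 else 0 with hF
  set K : ℕ → ℕ := fun y => if h : y ∈ C then (f ⟨y, h⟩).2 else 0 with hK
  have hprop : ∀ y (h : y ∈ C), f ⟨y, h⟩ = (F y, K y) ∧ F y ∈ MF C ∧ F y ∣ y
      ∧ K y < 2 * (nu x C (F y)).toNat := by
    intro y h
    have hmem := hfmem ⟨y, h⟩
    rw [ht] at hmem
    simp only [Finset.mem_biUnion, Finset.mem_image, Finset.mem_filter, Finset.mem_range] at hmem
    obtain ⟨m, ⟨hmM, hmy⟩, k, hk, hpair⟩ := hmem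
    have h1 : F y = m := by rw [hF]; simp only [dif_pos h, ← hpair]
    have h2 : K y = k := by rw [hK]; simp only [dif_pos h, ← hpair]
    subst h1; subst h2
    exact ⟨hpair.symm, hmM, hmy, hk⟩
  refine ⟨F, fun y hy => ⟨(hprop y hy).2.1, (hprop y hy).2.2.1⟩, ?_⟩
  intro m hm
  have hcard2 : (C.filter (fun y => F y = m)).card ≤ 2 * (nu x C m).toNat := by
    have := Finset.card_le_card_of_injOn K
      (s := C.filter (fun y => F y = m)) (t := Finset.range (2 * (nu x C m).toNat))
      (fun y hy => by
        rcases mem_filter.1 hy with ⟨hyC, hFy⟩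
        have := (hprop y hyC).2.2.2
        rw [hFy] at this
        exact Finset.mem_range.2 this)
      (fun y₁ hy₁ y₂ hy₂ hKeq => by
        rcases mem_filter.1 hy₁ with ⟨hy₁C, hF₁⟩
        rcases mem_filter.1 hy₂ with ⟨hy₂C, hF₂⟩
        have e₁ := (hprop y₁ hy₁C).1
        have e₂ := (hprop y₂ hy₂C).1
        have : f ⟨y₁, hy₁C⟩ = f ⟨y₂, hy₂C⟩ := by
          rw [e₁, e₂, hF₁, hF₂, hKeq]
        have := hfinj this
        exact congrArg Subtype.val this)
    simpa using this
  have hnn := nu_nonneg hx hdvd hne hanti htc hm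
  have : ((2 * (nu x C m).toNat : ℕ) : ℤ) = 2 * nu x C m := by
    push_cast
    omega
  calc ((C.filter (fun y => F y = m)).card : ℤ)
      ≤ ((2 * (nu x C m).toNat : ℕ) : ℤ) := by exact_mod_cast hcard2
    _ = 2 * nu x C m := this

include hx hdvd hne hanti in
theorem Psum_pos
    (htc : ∃ A B : Set ℕ, IsChain (· ∣ ·) A ∧ IsChain (· ∣ ·) B ∧ ↑(MF C) = A ∪ B)
    (hcard : 2 ≤ C.card) : 0 < Psum x C := by
  classical
  obtain ⟨F, hF1, hF2⟩ := exists_sigma hx hdvd hne hanti htc hcard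
  rw [Psum_eq hdvd, Finset.sum_insert (x_notMem_GF hdvd hne)]
  have hGF : MF C ∪ C = GF C := Finset.sdiff_union_of_subset C_subset_GF
  rw [← hGF, Finset.sum_union (show Disjoint (MF C) C from Finset.sdiff_disjoint),
    nu_x hdvd hne]
  have hCsum : ∑ w ∈ C, (nu x C w : ℚ) / w = - ∑ y ∈ C, 1 / (y : ℚ) := by
    rw [← Finset.sum_neg_distrib]
    refine Finset.sum_congr rfl fun y hy => ?_
    rw [nu_coatom hdvd hne hanti hy]
    push_cast
    ring
  rw [hCsum]
  have key : ∑ y ∈ C, (1:ℚ) / y ≤ ∑ m ∈ MF C, (nu x C m : ℚ) / m := by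
    have hmap : ∀ y ∈ C, F y ∈ MF C := fun y hy => (hF1 y hy).1
    rw [← Finset.sum_fiberwise_of_maps_to hmap (fun y => (1:ℚ) / y)]
    refine Finset.sum_le_sum fun m hm => ?_
    have hmpos : 0 < m := GF_pos hx hdvd (Finset.sdiff_subset hm)
    have hmQ : (0:ℚ) < m := by exact_mod_cast hmpos
    have hstep : ∀ y ∈ C.filter (fun y => F y = m), (1:ℚ) / y ≤ 1 / (2 * m) := by
      intro y hy
      rcases mem_filter.1 hy with ⟨hyC, hFy⟩
      have hdv : m ∣ y := hFy ▸ (hF1 y hyC).2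
      have hypos : 0 < y := Nat.pos_of_dvd_of_pos (hdvd y hyC) hx
      have hym : y ≠ m := by
        intro h
        exact (Finset.mem_sdiff.1 hm).2 (h ▸ hyC)
      obtain ⟨k, rfl⟩ := hdv
      have hk2 : 2 ≤ k := by
        rcases Nat.lt_or_ge k 2 with hk | hk
        · interval_cases k
          · simp at hypos
          · simp at hym
        · exact hk
      have h2m : (2 * m : ℚ) ≤ ((m * k : ℕ) : ℚ) := by
        have : 2 * m ≤ m * k := by nlinarith
        exact_mod_cast this
      exact one_div_le_one_div_of_le (by positivity) h2m
    calc ∑ y ∈ C.filter (fun y => F y = m), (1:ℚ) / y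
        ≤ (C.filter (fun y => F y = m)).card • ((1:ℚ) / (2 * m)) :=
          Finset.sum_le_card_nsmul _ _ _ hstep
      _ = ((C.filter (fun y => F y = m)).card : ℚ) * (1 / (2 * m)) := by
          rw [nsmul_eq_mul]
      _ ≤ (2 * (nu x C m : ℚ)) * (1 / (2 * m)) := by
          refine mul_le_mul_of_nonneg_right ?_ (by positivity)
          exact_mod_cast hF2 m hm
      _ = (nu x C m : ℚ) / m := by
          field_simp
  have hxQ : (0:ℚ) < 1 / x := by
    have : (0:ℚ) < x := by exact_mod_cast hx
    positivity
  have hxcast : ((1:ℤ) : ℚ) / x = 1 / (x:ℚ) := by norm_num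
  rw [hxcast]
  linarith

include hx hdvd hne hanti in
theorem Psum_ne_zero
    (htc : ∃ A B : Set ℕ, IsChain (· ∣ ·) A ∧ IsChain (· ∣ ·) B ∧ ↑(MF C) = A ∪ B) :
    Psum x C ≠ 0 := by
  classical
  rcases Nat.lt_or_ge C.card 2 with hlt | hge
  · interval_cases h : C.card
    · -- C = ∅
      have hC : C = ∅ := Finset.card_eq_zero.1 h
      subst hC
      rw [Psum]
      simp only [Finset.powerset_empty, Finset.sum_singleton, Finset.card_empty, pow_zero,
        gJ_empty]
      have : (x:ℚ) ≠ 0 := by positivity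
      exact one_div_ne_zero this
    · -- C = {y}
      obtain ⟨y, hC⟩ := Finset.card_eq_one.1 h
      subst hC
      have hyC : y ∈ ({y} : Finset ℕ) := Finset.mem_singleton_self y
      have hyx : y ∣ x := hdvd y hyC
      have hyne : y ≠ x := hne y hyC
      have hypos : 0 < y := Nat.pos_of_dvd_of_pos hyx hx
      have hylt : y < x := lt_of_le_of_ne (Nat.le_of_dvd hx hyx) hyne
      have hgJy : gJ x {y} = y := by
        rw [gJ_of_nonempty hdvd (Finset.Subset.refl _) ⟨y, hyC⟩]
        simp
      have hps : ({y} : Finset ℕ).powerset = {∅, {y}} := by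
        ext J
        simp [Finset.mem_powerset, Finset.subset_singleton_iff]
      have hval : Psum x {y} = 1/(x:ℚ) - 1/(y:ℚ) := by
        rw [Psum, hps, Finset.sum_insert (by
          simp only [Finset.mem_singleton]
          intro hcon
          exact Finset.singleton_ne_empty y hcon.symm), Finset.sum_singleton, gJ_empty, hgJy]
        simp only [Finset.card_empty, pow_zero, Finset.card_singleton, pow_one]
        ring
      rw [hval]
      have h1 : (1:ℚ)/x < 1/y :=
        one_div_lt_one_div_of_lt (by exact_mod_cast hypos) (by exact_mod_cast hylt)
      intro hcon
      rw [sub_eq_zero] at hcon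
      rw [hcon] at h1
      exact lt_irrefl _ h1
  · exact (Psum_pos hx hdvd hne hanti htc hge).ne'

end Core

/-! ### The recursively defined Ψ function and covers -/

noncomputable def Psi (S : Finset ℕ) (x : ℕ) : ℚ :=
  1/(x:ℚ) - ∑ z ∈ (S.filter (fun z => z ∣ x ∧ z ≠ x ∧ z < x)).attach,
    Psi S z.1
decreasing_by exact (Finset.mem_filter.1 z.2).2.2.2

/-- The set of covers of `x` in `S` (with respect to divisibility), as a `Finset`. -/
noncomputable def CovF (S : Finset ℕ) (x : ℕ) : Finset ℕ :=
  S.filter (fun y => y ∣ x ∧ y ≠ x ∧ ∀ z ∈ S, y ∣ z → z ∣ x → z = y ∨ z = x)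

section PartB

variable {S : Finset ℕ} (h0 : 0 ∉ S) (hg : ∀ a ∈ S, ∀ b ∈ S, Nat.gcd a b ∈ S)

include h0 in
theorem S_pos {z : ℕ} (hz : z ∈ S) : 0 < z := Nat.pos_of_ne_zero (fun h => h0 (h ▸ hz))

include h0 in
theorem Psi_eq {x : ℕ} (hx : x ∈ S) :
    Psi S x = 1/(x:ℚ) - ∑ z ∈ S.filter (fun z => z ∣ x ∧ z ≠ x), Psi S z := by
  have hset : S.filter (fun z => z ∣ x ∧ z ≠ x ∧ z < x) = S.filter (fun z => z ∣ x ∧ z ≠ x) := by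
    ext z
    simp only [Finset.mem_filter]
    constructor
    · rintro ⟨hzS, h1, h2, _⟩; exact ⟨hzS, h1, h2⟩
    · rintro ⟨hzS, h1, h2⟩
      exact ⟨hzS, h1, h2, lt_of_le_of_ne (Nat.le_of_dvd (S_pos h0 hx) h1) h2⟩
  rw [Psi, Finset.sum_attach (S.filter (fun z => z ∣ x ∧ z ≠ x ∧ z < x)) (fun z => Psi S z), hset]

include h0 in
theorem Psi_sum {x : ℕ} (hx : x ∈ S) :
    ∑ z ∈ S.filter (· ∣ x), Psi S z = 1/(x:ℚ) := by
  have hsplit : S.filter (· ∣ x) = insert x (S.filter (fun z => z ∣ x ∧ z ≠ x)) := by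
    ext z
    simp only [Finset.mem_filter, Finset.mem_insert]
    constructor
    · rintro ⟨hzS, hzx⟩
      rcases eq_or_ne z x with rfl | hne
      · exact Or.inl rfl
      · exact Or.inr ⟨hzS, hzx, hne⟩
    · rintro (rfl | ⟨hzS, hzx, _⟩)
      · exact ⟨hx, dvd_rfl⟩
      · exact ⟨hzS, hzx⟩
  rw [hsplit, Finset.sum_insert (by simp), Psi_eq h0 hx]
  ring

include hg in
theorem gcd_mem_S : ∀ {J : Finset ℕ}, J.Nonempty → J ⊆ S → J.gcd id ∈ S := by
  classical
  intro J
  induction J using Finset.induction_on with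
  | empty => intro h _; exact absurd h (by simp)
  | @insert a J ha ih =>
    intro _ hJS
    rw [Finset.gcd_insert]
    have haS : a ∈ S := hJS (Finset.mem_insert_self a J)
    rcases J.eq_empty_or_nonempty with rfl | hJne'
    · show Nat.gcd a (Finset.gcd ∅ id) ∈ S
      simpa using haS
    · have hJS' : J ⊆ S := fun z hz => hJS (Finset.mem_insert_of_mem hz)
      exact hg a haS _ (ih hJne' hJS')

include h0 in
theorem exists_cover {z x : ℕ} (hx : x ∈ S) (hz : z ∈ S) (hzx : z ∣ x) (hzne : z ≠ x) :
    ∃ y ∈ CovF S x, z ∣ y := by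
  classical
  have hTne : (S.filter (fun w => z ∣ w ∧ w ∣ x ∧ w ≠ x)).Nonempty :=
    ⟨z, Finset.mem_filter.2 ⟨hz, dvd_rfl, hzx, hzne⟩⟩
  set T := S.filter (fun w => z ∣ w ∧ w ∣ x ∧ w ≠ x)
  obtain ⟨hwS, hzw, hwx, hwne⟩ := Finset.mem_filter.1 (T.max'_mem hTne)
  refine ⟨T.max' hTne, Finset.mem_filter.2 ⟨hwS, hwx, hwne, ?_⟩, hzw⟩
  intro u huS hwu hux
  rcases eq_or_ne u x with rfl | hune
  · exact Or.inr rfl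
  · left
    have huT : u ∈ T := Finset.mem_filter.2 ⟨huS, hzw.trans hwu, hux, hune⟩
    exact le_antisymm (T.le_max' u huT) (Nat.le_of_dvd (S_pos h0 huS) hwu)

theorem CovF_dvd {x : ℕ} : ∀ y ∈ CovF S x, y ∣ x := fun y hy =>
  (Finset.mem_filter.1 hy).2.1

theorem CovF_ne {x : ℕ} : ∀ y ∈ CovF S x, y ≠ x := fun y hy =>
  (Finset.mem_filter.1 hy).2.2.1

theorem CovF_anti {x : ℕ} : ∀ y ∈ CovF S x, ∀ y' ∈ CovF S x, y ∣ y' → y = y' := by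
  intro y hy y' hy' hdvd'
  obtain ⟨hyS, hyx, hyne, hcov⟩ := Finset.mem_filter.1 hy
  obtain ⟨hy'S, hy'x, hy'ne, _⟩ := Finset.mem_filter.1 hy'
  rcases hcov y' hy'S hdvd' hy'x with h | h
  · exact h.symm
  · exact absurd h hy'ne

include h0 hg in
theorem Psi_eq_Psum {x : ℕ} (hx : x ∈ S) : Psi S x = Psum x (CovF S x) := by
  classical
  have hxpos : 0 < x := S_pos h0 hx
  set C := CovF S x with hC
  have hCsub : C ⊆ S := Finset.filter_subset _ _
  have hCdvd : ∀ y ∈ C, y ∣ x := CovF_dvd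
  have hgJS : ∀ J ∈ C.powerset, gJ x J ∈ S := by
    intro J hJ
    have hJC := Finset.mem_powerset.1 hJ
    rcases J.eq_empty_or_nonempty with rfl | hJne
    · rw [gJ_empty]; exact hx
    · rw [gJ_of_nonempty hCdvd hJC hJne]
      exact gcd_mem_S hg hJne (hJC.trans hCsub)
  have hgJdvd : ∀ J : Finset ℕ, gJ x J ∣ x := fun J =>
    Finset.gcd_dvd (Finset.mem_insert_self x J)
  rw [Psum]
  have step1 : ∑ J ∈ C.powerset, (-1:ℚ)^J.card / (gJ x J : ℚ)
      = ∑ J ∈ C.powerset, ∑ z ∈ S, (-1:ℚ)^J.card * (if z ∣ gJ x J then Psi S z else 0) := by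
    refine Finset.sum_congr rfl fun J hJ => ?_
    have h1 : ∑ z ∈ S, (if z ∣ gJ x J then Psi S z else 0) = 1/(gJ x J : ℚ) := by
      rw [← Finset.sum_filter]
      exact Psi_sum h0 (hgJS J hJ)
    rw [← Finset.mul_sum, h1]
    rw [div_eq_mul_one_div]
  rw [step1, Finset.sum_comm]
  have step2 : ∀ z ∈ S, ∑ J ∈ C.powerset, (-1:ℚ)^J.card * (if z ∣ gJ x J then Psi S z else 0)
      = if z = x then Psi S z else 0 := by
    intro z hz
    by_cases hzx : z ∣ x
    · have hiff : ∀ J, J ⊆ C → (z ∣ gJ x J ↔ J ⊆ C.filter (z ∣ ·)) := by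
        intro J hJC
        rw [dvd_gJ_iff hCdvd hJC hzx]
        constructor
        · intro h y hy; exact Finset.mem_filter.2 ⟨hJC hy, h y hy⟩
        · intro h y hy; exact (Finset.mem_filter.1 (h hy)).2
      have hcalc : ∑ J ∈ C.powerset, (-1:ℚ)^J.card * (if z ∣ gJ x J then Psi S z else 0)
          = (∑ J ∈ (C.filter (z ∣ ·)).powerset, (-1:ℚ)^J.card) * Psi S z := by
        calc ∑ J ∈ C.powerset, (-1:ℚ)^J.card * (if z ∣ gJ x J then Psi S z else 0)
            = ∑ J ∈ C.powerset.filter (fun J => z ∣ gJ x J), (-1:ℚ)^J.card * Psi S z := by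
              rw [Finset.sum_filter]
              refine Finset.sum_congr rfl fun J hJ => ?_
              by_cases h : z ∣ gJ x J <;> simp [h]
          _ = ∑ J ∈ (C.filter (z ∣ ·)).powerset, (-1:ℚ)^J.card * Psi S z := by
              refine Finset.sum_congr ?_ fun _ _ => rfl
              ext J
              simp only [Finset.mem_filter, Finset.mem_powerset]
              constructor
              · rintro ⟨hJC, hdg⟩; exact (hiff J hJC).1 hdg
              · intro h
                have hJC : J ⊆ C := h.trans (Finset.filter_subset _ _)
                exact ⟨hJC, (hiff J hJC).2 h⟩
          _ = _ := by rw [Finset.sum_mul]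
      rw [hcalc]
      have hz2 : (∑ J ∈ (C.filter (z ∣ ·)).powerset, (-1:ℚ)^J.card)
          = if C.filter (z ∣ ·) = ∅ then 1 else 0 := by
        have h := Finset.sum_powerset_neg_one_pow_card (x := C.filter (z ∣ ·))
        calc (∑ J ∈ (C.filter (z ∣ ·)).powerset, (-1:ℚ)^J.card)
            = ((∑ J ∈ (C.filter (z ∣ ·)).powerset, (-1:ℤ)^J.card : ℤ) : ℚ) := by
              push_cast; rfl
          _ = _ := by rw [h]; split <;> norm_num
      rw [hz2]
      rcases eq_or_ne z x with rfl | hzne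
      · have hempty : C.filter (z ∣ ·) = ∅ := by
          refine Finset.filter_eq_empty_iff.2 fun {y} hy hzy => ?_
          exact CovF_ne y hy (Nat.dvd_antisymm (CovF_dvd y hy) hzy)
        rw [if_pos hempty, if_pos rfl, one_mul]
      · obtain ⟨y, hyC, hzy⟩ := exists_cover h0 hx hz hzx hzne
        have hnonempty : C.filter (z ∣ ·) ≠ ∅ := by
          intro hcon
          have : y ∈ C.filter (z ∣ ·) := Finset.mem_filter.2 ⟨hyC, hzy⟩
          rw [hcon] at this
          exact absurd this (Finset.notMem_empty _)
        rw [if_neg hnonempty, if_neg hzne, zero_mul]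
    · have hzero : ∀ J ∈ C.powerset, (-1:ℚ)^J.card * (if z ∣ gJ x J then Psi S z else 0) = 0 := by
        intro J _
        rw [if_neg (fun h => hzx (h.trans (hgJdvd J))), mul_zero]
      rw [Finset.sum_congr rfl hzero, Finset.sum_const, smul_zero,
        if_neg (fun h => hzx (show z ∣ x by rw [h]))]
  rw [Finset.sum_congr rfl step2, Finset.sum_ite_eq' S x (fun z => Psi S z), if_pos hx]

include hg in
theorem CSdvd_eq_coe {x : ℕ} (hx : x ∈ S) : CSdvd S x = ↑(CovF S x) := by
  ext y
  rw [Finset.mem_coe, CovF, Finset.mem_filter]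
  simp only [CSdvd, Set.mem_setOf_eq]
  constructor
  · rintro ⟨h1, _, h3, h4, h5⟩; exact ⟨h1, h3, h4, h5⟩
  · rintro ⟨h1, h3, h4, h5⟩; exact ⟨h1, hx, h3, h4, h5⟩

theorem gcdcl_coe (C : Finset ℕ) : gcdcl ↑C = ↑(GF C) := by
  ext w
  simp only [gcdcl, Set.mem_setOf_eq, GF, Finset.coe_image, Set.mem_image, Finset.mem_coe,
    Finset.mem_erase, Finset.mem_powerset]
  constructor
  · rintro ⟨F, hFne, hFsub, rfl⟩
    exact ⟨F, ⟨Finset.nonempty_iff_ne_empty.1 hFne, Finset.coe_subset.1 hFsub⟩, rfl⟩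
  · rintro ⟨J, ⟨hJne, hJC⟩, rfl⟩
    exact ⟨J, Finset.nonempty_iff_ne_empty.2 hJne, Finset.coe_subset.2 hJC, rfl⟩

include hg in
theorem MF_coe {x : ℕ} (hx : x ∈ S) :
    ↑(MF (CovF S x)) = gcdcl (CSdvd S x) \ CSdvd S x := by
  rw [CSdvd_eq_coe hg hx, gcdcl_coe, MF, Finset.coe_sdiff]

include h0 hg in
theorem Psi_ne_zero {x : ℕ} (hx : x ∈ S) (hdc : genDCdvd S x) : Psi S x ≠ 0 := by
  rw [Psi_eq_Psum h0 hg hx]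
  obtain ⟨A, B, _, hA, hB, heq⟩ := hdc
  exact Psum_ne_zero (S_pos h0 hx) CovF_dvd CovF_ne CovF_anti
    ⟨A, B, hA, hB, by rw [MF_coe hg hx]; exact heq⟩

end PartB

end Stmt9Aux

theorem stmt9 (S : Finset ℕ) (h0 : 0 ∉ S)
    (hg : ∀ a ∈ S, ∀ b ∈ S, Nat.gcd a b ∈ S)
    (hdc : ∀ x ∈ S, genDCdvd S x) :
    (Matrix.of fun a b : {x // x ∈ S} => (Nat.lcm a.1 b.1 : ℚ)).det ≠ 0 := by
  classical
  set Bm : Matrix {x // x ∈ S} {x // x ∈ S} ℚ :=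
    Matrix.of (fun i k : {x // x ∈ S} => if (k:ℕ) ∣ (i:ℕ) then ((i:ℕ) : ℚ) else 0) with hBm
  set D : Matrix {x // x ∈ S} {x // x ∈ S} ℚ :=
    Matrix.diagonal (fun k : {x // x ∈ S} => Stmt9Aux.Psi S k) with hD
  have key : (Matrix.of fun a b : {x // x ∈ S} => (Nat.lcm a.1 b.1 : ℚ))
      = Bm * D * Bm.transpose := by
    ext i j
    have hgij : Nat.gcd i.1 j.1 ∈ S := hg i.1 i.2 j.1 j.2
    have hgpos : 0 < Nat.gcd i.1 j.1 := Stmt9Aux.S_pos h0 hgij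
    have hBD : ∀ k : {x // x ∈ S}, (Bm * D) i k = Bm i k * Stmt9Aux.Psi S k := by
      intro k
      rw [hD, Matrix.mul_diagonal]
    have h1 : (Bm * D * Bm.transpose) i j
        = ∑ k : {x // x ∈ S}, Bm i k * Stmt9Aux.Psi S k * Bm j k := by
      rw [Matrix.mul_apply]
      exact Finset.sum_congr rfl fun k _ => by rw [hBD k, Matrix.transpose_apply]
    have h2 : ∀ k : {x // x ∈ S}, Bm i k * Stmt9Aux.Psi S k * Bm j k
        = ((i.1 : ℚ) * j.1) * (if (k:ℕ) ∣ Nat.gcd i.1 j.1 then Stmt9Aux.Psi S k else 0) := by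
      intro k
      rw [hBm]
      simp only [Matrix.of_apply]
      by_cases hki : (k:ℕ) ∣ (i:ℕ) <;> by_cases hkj : (k:ℕ) ∣ (j:ℕ)
      · rw [if_pos hki, if_pos hkj, if_pos (Nat.dvd_gcd hki hkj)]; ring
      · rw [if_pos hki, if_neg hkj, if_neg (fun h => hkj (h.trans (Nat.gcd_dvd_right _ _)))]
        ring
      · rw [if_neg hki, if_pos hkj, if_neg (fun h => hki (h.trans (Nat.gcd_dvd_left _ _)))]
        ring
      · rw [if_neg hki, if_neg hkj, if_neg (fun h => hki (h.trans (Nat.gcd_dvd_left _ _)))]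
        ring
    have h3 : ∑ k : {x // x ∈ S}, (if (k:ℕ) ∣ Nat.gcd i.1 j.1 then Stmt9Aux.Psi S k else 0)
        = 1 / ((Nat.gcd i.1 j.1 : ℚ)) := by
      rw [Finset.sum_coe_sort S
          (fun z => if z ∣ Nat.gcd i.1 j.1 then Stmt9Aux.Psi S z else 0),
        ← Finset.sum_filter]
      exact Stmt9Aux.Psi_sum h0 hgij
    have h4 : (Bm * D * Bm.transpose) i j = ((i.1 : ℚ) * j.1) * (1 / (Nat.gcd i.1 j.1 : ℚ)) := by
      rw [h1, Finset.sum_congr rfl fun k _ => h2 k, ← Finset.mul_sum, h3]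
    rw [Matrix.of_apply, h4]
    have hlcm : (Nat.gcd i.1 j.1 : ℚ) * (Nat.lcm i.1 j.1 : ℚ) = (i.1 : ℚ) * j.1 := by
      exact_mod_cast congrArg (Nat.cast : ℕ → ℚ) (Nat.gcd_mul_lcm i.1 j.1)
    have hgne : (Nat.gcd i.1 j.1 : ℚ) ≠ 0 := by
      exact_mod_cast hgpos.ne'
    field_simp
    linarith [hlcm]
  rw [key, Matrix.det_mul, Matrix.det_mul, Matrix.det_transpose]
  have hBtri : Bm.BlockTriangular OrderDual.toDual := by
    intro i j hij
    rw [hBm]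
    simp only [Matrix.of_apply]
    have hij' : (i:ℕ) < (j:ℕ) := hij
    refine if_neg fun hdvd' => ?_
    have := Nat.le_of_dvd (Stmt9Aux.S_pos h0 i.2) hdvd'
    omega
  have hdetB : Bm.det = ∏ i : {x // x ∈ S}, ((i:ℕ) : ℚ) := by
    rw [Matrix.det_of_lowerTriangular Bm hBtri]
    refine Finset.prod_congr rfl fun i _ => ?_
    rw [hBm]
    simp
  have hdetD : D.det = ∏ k : {x // x ∈ S}, Stmt9Aux.Psi S k := by
    rw [hD, Matrix.det_diagonal]
  rw [hdetB, hdetD]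
  refine mul_ne_zero (mul_ne_zero ?_ ?_) ?_
  · exact Finset.prod_ne_zero_iff.2 fun i _ => by
      exact_mod_cast (Stmt9Aux.S_pos h0 i.2).ne'
  · exact Finset.prod_ne_zero_iff.2 fun k _ =>
      Stmt9Aux.Psi_ne_zero h0 hg k.2 (hdc k.1 k.2)
  · exact Finset.prod_ne_zero_iff.2 fun i _ => by
      exact_mod_cast (Stmt9Aux.S_pos h0 i.2).ne'
end
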